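/- arXiv:2511.00572 — 4 statements merged into one kernel-verified Lean document; each statement's English description precedes it below -/
import Mathlib

section
/- Assume the standing assumptions on a noise family (ω, (ζ_δ)_{δ∈(0,1]}). Let V be a real normed space, φ ∈ V, and η > 0. For ε ∈ (0,1] and δ ∈ (0,1] define x*_{δ,ε}(t) := ε ∫_{−∞}^t e^{−η(t−s)} ζ_δ(s) φ ds and x*_{0,ε}(t) := ε ( ω(t) φ − η ∫_{−∞}^t e^{−η(t−s)} ω(s) φ ds ). Then both integrals converge absolutely for every t ∈ ℝ, and for every t ≤ 0, lim_{δ→0⁺} sup_{ε ∈ (0,1]} ‖x*_{δ,ε}(t) − x*_{0,ε}(t)‖ = 0; in particular ‖x*_{δ,ε}(t) − x*_{0,ε}(t)‖ → 0 as δ → 0⁺ and ε → 0⁺. -/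
open Filter Topology MeasureTheory


section St6Helpers

open Set

lemma st6_exp_int {b : ℝ} (hb : 0 < b) (c : ℝ) :
    IntegrableOn (fun s => Real.exp (b * s)) (Set.Iic c) volume := by
  refine integrableOn_Iic_of_intervalIntegral_norm_bounded (Real.exp (b * c) / b) c
    (fun y => ((Real.continuous_exp.comp (continuous_const.mul continuous_id)).integrableOn_Ioc))
    tendsto_id ?_
  filter_upwards with y
  have hder : ∀ x ∈ Set.uIcc y c, HasDerivAt (fun z => Real.exp (b * z) / b) (Real.exp (b * x)) x := by
    intro x _
    have h := (((hasDerivAt_id x).const_mul b).exp).div_const b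
    simpa [mul_one, mul_div_cancel_left₀, hb.ne'] using h
  have hint : IntervalIntegrable (fun x => Real.exp (b * x)) volume y c :=
    (Real.continuous_exp.comp (continuous_const.mul continuous_id)).intervalIntegrable _ _
  have hval := intervalIntegral.integral_eq_sub_of_hasDerivAt hder hint
  have : (∫ x in y..c, ‖Real.exp (b * x)‖) = ∫ x in y..c, Real.exp (b * x) := by
    simp [Real.norm_eq_abs, abs_of_pos (Real.exp_pos _)]
  simp only [id_eq]
  rw [this, hval]
  have := Real.exp_pos (b * y)
  have := Real.exp_pos (b * c)
  rw [div_sub_div_same]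
  gcongr
  linarith

lemma st6_poly_exp_atBot {b : ℝ} (hb : 0 < b) :
    Tendsto (fun s : ℝ => (|s| + 1) ^ 2 * Real.exp (b * s)) atBot (𝓝 0) := by
  have h1 := Real.tendsto_pow_mul_exp_neg_atTop_nhds_zero 2
  have htend : Tendsto (fun s : ℝ => b * (|s| + 1)) atBot atTop := by
    apply Tendsto.const_mul_atTop hb
    have : Tendsto (fun s : ℝ => |s|) atBot atTop := tendsto_abs_atBot_atTop
    exact this.atTop_add tendsto_const_nhds
  have h2 : Tendsto (fun s : ℝ => (b * (|s| + 1)) ^ 2 * Real.exp (-(b * (|s| + 1)))) atBot (𝓝 0) :=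
    h1.comp htend
  have h3 := h2.const_mul (Real.exp b / b ^ 2)
  rw [mul_zero] at h3
  apply h3.congr'
  filter_upwards [Iic_mem_atBot (0:ℝ)] with s hs
  have habs : |s| = -s := abs_of_nonpos hs
  rw [habs]
  rw [show -(b * (-s + 1)) = b * s - b by ring, Real.exp_sub]
  field_simp

lemma st6_int {η : ℝ} (hη : 0 < η) {h : ℝ → ℝ} (hc : Continuous h) {B : ℝ}
    (hB : ∀ s, |h s| ≤ B * (|s| + 1) ^ 2) (t : ℝ) :
    IntegrableOn (fun s => Real.exp (-(η * (t - s))) * h s) (Set.Iic t) volume := by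
  have hB0 : 0 ≤ B := by have h0 := (abs_nonneg (h 0)).trans (hB 0); simpa using h0
  have hcont : Continuous fun s => Real.exp (-(η * (t - s))) * h s := by fun_prop
  refine LocallyIntegrableOn.integrableOn_of_isBigO_atBot
    (g := fun s => Real.exp (η / 2 * s))
    ((hcont.locallyIntegrable (μ := volume)).locallyIntegrableOn _) ?_
    ⟨Iic 0, Iic_mem_atBot 0, st6_exp_int (by positivity) 0⟩
  rw [Asymptotics.isBigO_iff]
  refine ⟨Real.exp (-(η * t)) * B, ?_⟩
  have hev : ∀ᶠ s : ℝ in atBot, (|s| + 1) ^ 2 * Real.exp (η / 2 * s) ≤ 1 :=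
    (st6_poly_exp_atBot (by positivity)).eventually (eventually_le_nhds zero_lt_one)
  filter_upwards [hev] with s hs
  have h1 : ‖Real.exp (-(η * (t - s))) * h s‖ ≤ Real.exp (-(η * (t - s))) * (B * (|s| + 1) ^ 2) := by
    rw [Real.norm_eq_abs, abs_mul, abs_of_pos (Real.exp_pos _)]
    exact mul_le_mul_of_nonneg_left (hB s) (Real.exp_pos _).le
  refine h1.trans ?_
  rw [Real.norm_eq_abs, abs_of_pos (Real.exp_pos _)]
  have hsplit : Real.exp (-(η * (t - s))) =
      Real.exp (-(η * t)) * (Real.exp (η / 2 * s) * Real.exp (η / 2 * s)) := by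
    rw [← Real.exp_add, ← Real.exp_add]; ring_nf
  rw [hsplit]
  calc Real.exp (-(η * t)) * (Real.exp (η / 2 * s) * Real.exp (η / 2 * s)) * (B * (|s| + 1) ^ 2)
      = (Real.exp (-(η * t)) * B) * (((|s| + 1) ^ 2 * Real.exp (η / 2 * s)) * Real.exp (η / 2 * s)) := by
        ring
    _ ≤ (Real.exp (-(η * t)) * B) * (1 * Real.exp (η / 2 * s)) := by
        apply mul_le_mul_of_nonneg_left _ (by positivity)
        exact mul_le_mul_of_nonneg_right hs (Real.exp_pos _).le
    _ = Real.exp (-(η * t)) * B * Real.exp (η / 2 * s) := by ring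

lemma st6_Gbd {z : ℝ → ℝ} (hzc : Continuous z) {K : ℝ} (hK : 0 ≤ K)
    (hKb : ∀ r, |z r| ≤ K * (|r| + 1)) (s : ℝ) :
    |∫ r in (0:ℝ)..s, z r| ≤ K * (|s| + 1) ^ 2 := by
  have h1 : ‖∫ r in (0:ℝ)..s, z r‖ ≤ K * (|s| + 1) * |s - 0| := by
    apply intervalIntegral.norm_integral_le_of_norm_le_const
    intro x hx
    have hxs : |x| ≤ |s| := by
      rcases le_total 0 s with hs | hs
      · rw [Set.uIoc_of_le hs] at hx
        rw [abs_of_pos hx.1, abs_of_nonneg hs]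
        exact hx.2
      · rw [Set.uIoc_of_ge hs] at hx
        rw [abs_of_nonpos hx.2, abs_of_nonpos hs]
        linarith [hx.1]
    calc ‖z x‖ ≤ K * (|x| + 1) := hKb x
      _ ≤ K * (|s| + 1) := by gcongr
  rw [Real.norm_eq_abs] at h1
  refine h1.trans ?_
  rw [sub_zero]
  nlinarith [abs_nonneg s]

lemma st6_ibp {η : ℝ} (hη : 0 < η) {z : ℝ → ℝ} (hzc : Continuous z) {K : ℝ} (hK : 0 ≤ K)
    (hKb : ∀ r, |z r| ≤ K * (|r| + 1)) (t : ℝ) :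
    ∫ s in Set.Iic t, Real.exp (-(η * (t - s))) * z s =
      (∫ r in (0:ℝ)..t, z r) -
        η * ∫ s in Set.Iic t, Real.exp (-(η * (t - s))) * ∫ r in (0:ℝ)..s, z r := by
  set u : ℝ → ℝ := fun x => Real.exp (-(η * (t - x))) with hu_def
  set v : ℝ → ℝ := fun x => ∫ r in (0:ℝ)..x, z r with hv_def
  have hu : ∀ x : ℝ, HasDerivAt u (η * u x) x := by
    intro x
    have h1 : HasDerivAt (fun x : ℝ => η * x - η * t) η x := by
      simpa using ((hasDerivAt_id x).const_mul η).sub_const (η * t)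
    have h2 := h1.exp
    have heq : (fun x : ℝ => Real.exp (η * x - η * t)) = u := by
      funext y; simp only [hu_def]; ring_nf
    rw [heq] at h2
    have : Real.exp (η * x - η * t) * η = η * u x := by
      simp only [hu_def]; ring_nf
    rwa [this] at h2
  have hv : ∀ x : ℝ, HasDerivAt v (z x) x := fun x =>
    intervalIntegral.integral_hasDerivAt_right (hzc.intervalIntegrable _ _)
      (hzc.stronglyMeasurable.stronglyMeasurableAtFilter) hzc.continuousAt
  have hvc : Continuous v := by
    rw [continuous_iff_continuousAt]; exact fun x => (hv x).continuousAt
  have huc : Continuous u := by fun_prop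
  have hvb : ∀ s, |v s| ≤ K * (|s| + 1) ^ 2 := st6_Gbd hzc hK hKb
  have huv' : IntegrableOn (u * fun x => z x) (Set.Iic t) volume := by
    have hb2 : ∀ s : ℝ, |z s| ≤ K * (|s| + 1) ^ 2 := by
      intro s
      refine (hKb s).trans (mul_le_mul_of_nonneg_left ?_ hK)
      nlinarith [abs_nonneg s]
    simpa [Pi.mul_def] using st6_int hη hzc hb2 t
  have hu'v : IntegrableOn ((fun x => η * u x) * v) (Set.Iic t) volume := by
    have h1 := (st6_int hη hvc hvb t).const_mul η
    simpa [Pi.mul_def, mul_assoc, hu_def, IntegrableOn] using h1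
  have h_zero : Tendsto (u * v) (nhdsWithin t (Set.Iio t)) (𝓝 (v t)) := by
    have h1 : Tendsto (u * v) (𝓝 t) (𝓝 (u t * v t)) := ((huc.mul hvc).tendsto t)
    have h2 : u t * v t = v t := by simp [hu_def]
    rw [h2] at h1
    exact h1.mono_left nhdsWithin_le_nhds
  have h_infty : Tendsto (u * v) atBot (𝓝 0) := by
    refine squeeze_zero_norm
      (a := fun s => (Real.exp (-(η * t)) * K) * ((|s| + 1) ^ 2 * Real.exp (η * s))) ?_ ?_
    · intro s
      have : ‖u s * v s‖ = u s * |v s| := by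
        rw [norm_mul, Real.norm_eq_abs, Real.norm_eq_abs, abs_of_pos (Real.exp_pos _)]
      rw [Pi.mul_apply, this]
      calc u s * |v s| ≤ u s * (K * (|s| + 1) ^ 2) :=
            mul_le_mul_of_nonneg_left (hvb s) (Real.exp_pos _).le
        _ = Real.exp (-(η * t)) * K * ((|s| + 1) ^ 2 * Real.exp (η * s)) := by
            simp only [hu_def]
            rw [show -(η * (t - s)) = -(η * t) + η * s by ring, Real.exp_add]
            ring
    · have := (st6_poly_exp_atBot hη).const_mul (Real.exp (-(η * t)) * K)
      simpa using this
  have key := MeasureTheory.integral_Iic_mul_deriv_eq_deriv_mul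
    (u := u) (v := v) (u' := fun x => η * u x) (v' := z) (a := t)
    (fun x _ => hu x) (fun x _ => hv x) huv' hu'v h_zero h_infty
  have hrw : ∫ x in Set.Iic t, (fun x => η * u x) x * v x =
      η * ∫ s in Set.Iic t, Real.exp (-(η * (t - s))) * ∫ r in (0:ℝ)..s, z r := by
    rw [← MeasureTheory.integral_const_mul]
    simp only [hu_def, hv_def, mul_assoc]
  calc ∫ s in Set.Iic t, Real.exp (-(η * (t - s))) * z s = ∫ x in Set.Iic t, u x * z x := rfl
    _ = v t - 0 - ∫ x in Set.Iic t, (fun x => η * u x) x * v x := key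
    _ = (∫ r in (0:ℝ)..t, z r) -
        η * ∫ s in Set.Iic t, Real.exp (-(η * (t - s))) * ∫ r in (0:ℝ)..s, z r := by
        rw [hrw]; simp [hv_def]

lemma st6_sup_eps {c : ℝ} (hc : 0 ≤ c) : (⨆ ε ∈ Set.Ioc (0:ℝ) 1, ε * c) = c := by
  apply le_antisymm
  · exact Real.iSup_le (fun ε => Real.iSup_le (fun hε => mul_le_of_le_one_left hc hε.2) hc) hc
  · have hb2 : BddAbove (Set.range fun ε : ℝ => ⨆ _ : ε ∈ Set.Ioc (0:ℝ) 1, ε * c) := by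
      refine ⟨c, ?_⟩
      rintro x ⟨ε, rfl⟩
      exact Real.iSup_le (fun hε => mul_le_of_le_one_left hc hε.2) hc
    refine le_ciSup_of_le hb2 1 ?_
    rw [ciSup_pos (Set.mem_Ioc.mpr ⟨one_pos, le_refl 1⟩), one_mul]

end St6Helpers

/-- For a noise family `(ω, (ζ_δ))` satisfying the standing assumptions,
with `φ` in a normed space `V` and `η > 0`, set
`x*_{δ,ε}(t) = ε ∫_{-∞}^t e^{-η(t-s)} ζ_δ(s) φ ds` and
`x*_{0,ε}(t) = ε (ω(t) φ - η ∫_{-∞}^t e^{-η(t-s)} ω(s) φ ds)`.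
Then the integrals converge absolutely for every `t`, for every `t ≤ 0`
`sup_{ε ∈ (0,1]} ‖x*_{δ,ε}(t) - x*_{0,ε}(t)‖ → 0` as `δ → 0⁺`, and in particular
`‖x*_{δ,ε}(t) - x*_{0,ε}(t)‖ → 0` as `δ → 0⁺` and `ε → 0⁺` jointly. -/
theorem statement6 {V : Type*} [NormedAddCommGroup V] [NormedSpace ℝ V]
    (φ : V) (η : ℝ) (hη : 0 < η)
    (ω : ℝ → ℝ) (hωc : Continuous ω) (hω0 : ω 0 = 0)
    (ζ : ℝ → ℝ → ℝ) (hζc : ∀ δ ∈ Set.Ioc (0 : ℝ) 1, Continuous (ζ δ))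
    -- (i) sublinear growth of ω
    (C : ℝ) (hC : 0 ≤ C) (hωbd : ∀ t : ℝ, |ω t| ≤ C * (|t| + 1))
    -- (ii) sublinear growth of each ζ_δ
    (hζbd : ∀ δ ∈ Set.Ioc (0 : ℝ) 1, ∃ K > 0, ∀ t : ℝ, |ζ δ t| ≤ K * (|t| + 1))
    -- (iii) F_δ → 0 uniformly on compacts, where F_δ(t) = ∫_0^t ζ_δ - ω(t)
    (hFunif : ∀ T > (0 : ℝ),
      Tendsto (fun δ => ⨆ t ∈ Set.Icc (-T) T, |(∫ r in (0:ℝ)..t, ζ δ r) - ω t|)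
        (𝓝[>] 0) (𝓝 0))
    -- (iv) F_δ(t)/t → 0 as t → ±∞, uniformly for δ ∈ (0, δ̃]
    (hFtail : ∃ δt ∈ Set.Ioc (0 : ℝ) 1, ∀ θ > (0 : ℝ), ∃ M > (0 : ℝ),
      ∀ δ ∈ Set.Ioc (0 : ℝ) δt, ∀ t : ℝ, M ≤ |t| →
        |(∫ r in (0:ℝ)..t, ζ δ r) - ω t| ≤ θ * |t|) :
    (∀ δ ∈ Set.Ioc (0 : ℝ) 1, ∀ t : ℝ,
      IntegrableOn (fun s => Real.exp (-(η * (t - s))) * ζ δ s) (Set.Iic t) volume) ∧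
    (∀ t : ℝ,
      IntegrableOn (fun s => Real.exp (-(η * (t - s))) * ω s) (Set.Iic t) volume) ∧
    (∀ t ≤ (0 : ℝ),
      Tendsto (fun δ => ⨆ ε ∈ Set.Ioc (0 : ℝ) 1,
          ‖(ε * ∫ s in Set.Iic t, Real.exp (-(η * (t - s))) * ζ δ s) • φ -
            (ε * (ω t - η * ∫ s in Set.Iic t, Real.exp (-(η * (t - s))) * ω s)) • φ‖)
        (𝓝[>] 0) (𝓝 0)) ∧
    (∀ t ≤ (0 : ℝ),
      Tendsto (fun de : ℝ × ℝ =>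
          ‖(de.2 * ∫ s in Set.Iic t, Real.exp (-(η * (t - s))) * ζ de.1 s) • φ -
            (de.2 * (ω t - η * ∫ s in Set.Iic t, Real.exp (-(η * (t - s))) * ω s)) • φ‖)
        ((𝓝[>] 0) ×ˢ (𝓝[>] 0)) (𝓝 0)) := by
  obtain ⟨δt, hδt, htail⟩ := hFtail
  -- integrability of the ζ integrals
  have hIζ : ∀ δ ∈ Set.Ioc (0 : ℝ) 1, ∀ t : ℝ,
      IntegrableOn (fun s => Real.exp (-(η * (t - s))) * ζ δ s) (Set.Iic t) volume := by
    intro δ hδ t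
    obtain ⟨K, hK, hKb⟩ := hζbd δ hδ
    refine st6_int hη (hζc δ hδ) (B := K) (fun s => (hKb s).trans ?_) t
    refine mul_le_mul_of_nonneg_left ?_ hK.le
    nlinarith [abs_nonneg s]
  -- integrability of the ω integrals
  have hIω : ∀ t : ℝ,
      IntegrableOn (fun s => Real.exp (-(η * (t - s))) * ω s) (Set.Iic t) volume := by
    intro t
    refine st6_int hη hωc (B := C) (fun s => (hωbd s).trans ?_) t
    refine mul_le_mul_of_nonneg_left ?_ hC
    nlinarith [abs_nonneg s]
  -- the key convergence of the scalar deviation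
  have hDkey : ∀ t ≤ (0 : ℝ),
      Tendsto (fun δ => |(∫ s in Set.Iic t, Real.exp (-(η * (t - s))) * ζ δ s) -
          (ω t - η * ∫ s in Set.Iic t, Real.exp (-(η * (t - s))) * ω s)|)
        (𝓝[>] 0) (𝓝 0) := by
    intro t ht
    -- constant A
    have hwc : Continuous fun s : ℝ => |s| + 1 := continuous_abs.add continuous_const
    have hwb : ∀ s : ℝ, |(|s| + 1)| ≤ 1 * (|s| + 1) ^ 2 := by
      intro s
      rw [abs_of_pos (by positivity)]
      nlinarith [abs_nonneg s]
    have hAint : IntegrableOn (fun s => Real.exp (-(η * (t - s))) * (|s| + 1)) (Set.Iic t) volume :=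
      st6_int hη hwc hwb t
    set A : ℝ := (|t| + 1) + η * ∫ s in Set.Iic t, Real.exp (-(η * (t - s))) * (|s| + 1) with hA
    have hApos : 0 < A := by
      have h1 : 0 ≤ ∫ s in Set.Iic t, Real.exp (-(η * (t - s))) * (|s| + 1) := by
        refine MeasureTheory.setIntegral_nonneg measurableSet_Iic (fun x _ => ?_)
        positivity
      have h2 : (0:ℝ) < |t| + 1 := by positivity
      nlinarith
    rw [Metric.tendsto_nhds]
    intro ε' hε'
    set θ : ℝ := ε' / (2 * A) with hθdef
    have hθ : 0 < θ := by positivity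
    obtain ⟨M, hM, hMtail⟩ := htail θ hθ
    set T : ℝ := M + |t| + 1 with hT
    have hTpos : 0 < T := by positivity
    have hev1 : ∀ᶠ δ in 𝓝[>] (0:ℝ), δ ∈ Set.Ioc (0:ℝ) δt :=
      eventually_of_mem (Ioc_mem_nhdsGT_of_mem ⟨le_refl 0, hδt.1⟩) (fun _ h => h)
    have hev2 : ∀ᶠ δ in 𝓝[>] (0:ℝ),
        (⨆ r ∈ Set.Icc (-T) T, |(∫ u in (0:ℝ)..r, ζ δ u) - ω r|) < θ :=
      (hFunif T hTpos).eventually (eventually_lt_nhds hθ)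
    filter_upwards [hev1, hev2] with δ hδ1 hsup
    have hδIoc : δ ∈ Set.Ioc (0:ℝ) 1 := ⟨hδ1.1, hδ1.2.trans hδt.2⟩
    obtain ⟨K, hK, hKb⟩ := hζbd δ hδIoc
    have hzc := hζc δ hδIoc
    -- F and its continuity
    set F : ℝ → ℝ := fun s => (∫ u in (0:ℝ)..s, ζ δ u) - ω s with hF
    have hFc : Continuous F :=
      (intervalIntegral.continuous_primitive (fun a b => hzc.intervalIntegrable a b) 0).sub hωc
    -- pointwise bound on F
    have hFpt : ∀ s ≤ t, |F s| ≤ θ * (|s| + 1) := by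
      intro s hs
      by_cases hsM : M ≤ |s|
      · refine (hMtail δ hδ1 s hsM).trans ?_
        nlinarith
      · push_neg at hsM
        have hsT : s ∈ Set.Icc (-T) T := by
          rcases abs_lt.mp hsM with ⟨h1, h2⟩
          constructor <;> [skip; skip] <;> simp only [hT] <;> nlinarith [abs_nonneg t]
        have hbdd : BddAbove ((fun r => |F r|) '' Set.Icc (-T) T) :=
          (isCompact_Icc.image_of_continuousOn hFc.abs.continuousOn).bddAbove
        obtain ⟨c0, hc0⟩ := hbdd
        have hbdd2 : BddAbove (Set.range fun r : ℝ => ⨆ _ : r ∈ Set.Icc (-T) T, |F r|) := by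
          refine ⟨max c0 0, ?_⟩
          rintro x ⟨r, rfl⟩
          by_cases hr : r ∈ Set.Icc (-T) T
          · show (⨆ _ : r ∈ Set.Icc (-T) T, |F r|) ≤ max c0 0
            rw [ciSup_pos (f := fun _ : r ∈ Set.Icc (-T) T => |F r|) hr]
            exact le_max_of_le_left (hc0 ⟨r, hr, rfl⟩)
          · exact Real.iSup_le (fun hh => (hr hh).elim) (le_max_right _ _)
        have hle : |F s| ≤ ⨆ r ∈ Set.Icc (-T) T, |F r| := by
          have heq : |F s| = ⨆ _ : s ∈ Set.Icc (-T) T, |F s| := (ciSup_pos (f := fun _ : s ∈ Set.Icc (-T) T => |F s|) hsT).symm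
          rw [heq]
          exact le_ciSup hbdd2 s
        have : |F s| < θ := lt_of_le_of_lt hle hsup
        nlinarith [abs_nonneg s, this.le]
    -- the integration by parts identity
    have hibp := st6_ibp hη hzc hK.le hKb t
    -- integrability of exp * primitive and exp * F
    have hGc : Continuous fun s : ℝ => ∫ u in (0:ℝ)..s, ζ δ u :=
      intervalIntegral.continuous_primitive (fun a b => hzc.intervalIntegrable a b) 0
    have hIG : IntegrableOn
        (fun s => Real.exp (-(η * (t - s))) * ∫ u in (0:ℝ)..s, ζ δ u) (Set.Iic t) volume :=
      st6_int hη hGc (st6_Gbd hzc hK.le hKb) t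
    have hIF : IntegrableOn (fun s => Real.exp (-(η * (t - s))) * F s) (Set.Iic t) volume := by
      have := hIG.sub (hIω t)
      simpa [hF, mul_sub, Pi.sub_def] using this
    -- the identity D = F t - η ∫ exp * F
    have hsub : ∫ s in Set.Iic t, Real.exp (-(η * (t - s))) * F s =
        (∫ s in Set.Iic t, Real.exp (-(η * (t - s))) * ∫ u in (0:ℝ)..s, ζ δ u) -
          ∫ s in Set.Iic t, Real.exp (-(η * (t - s))) * ω s := by
      rw [← MeasureTheory.integral_sub hIG (hIω t)]
      congr 1
      funext s
      simp [hF, mul_sub]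
    have hDeq : (∫ s in Set.Iic t, Real.exp (-(η * (t - s))) * ζ δ s) -
        (ω t - η * ∫ s in Set.Iic t, Real.exp (-(η * (t - s))) * ω s) =
        F t - η * ∫ s in Set.Iic t, Real.exp (-(η * (t - s))) * F s := by
      rw [hibp, hsub]
      simp only [hF]
      ring
    -- bound the integral term
    have hbnd : |∫ s in Set.Iic t, Real.exp (-(η * (t - s))) * F s| ≤
        θ * ∫ s in Set.Iic t, Real.exp (-(η * (t - s))) * (|s| + 1) := by
      have h1 : |∫ s in Set.Iic t, Real.exp (-(η * (t - s))) * F s| ≤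
          ∫ s in Set.Iic t, Real.exp (-(η * (t - s))) * |F s| := by
        simpa [Real.norm_eq_abs, abs_mul, abs_of_pos (Real.exp_pos _)] using
          MeasureTheory.norm_integral_le_integral_norm
            (fun s => Real.exp (-(η * (t - s))) * F s) (μ := volume.restrict (Set.Iic t))
      refine h1.trans ?_
      rw [← MeasureTheory.integral_const_mul]
      have hIF2 : IntegrableOn (fun s => Real.exp (-(η * (t - s))) * |F s|) (Set.Iic t) volume := by
        simpa [abs_mul, abs_of_pos (Real.exp_pos _), IntegrableOn] using hIF.abs
      refine MeasureTheory.setIntegral_mono_on hIF2 (hAint.const_mul θ)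
        measurableSet_Iic (fun x hx => ?_)
      calc Real.exp (-(η * (t - x))) * |F x| ≤
          Real.exp (-(η * (t - x))) * (θ * (|x| + 1)) :=
            mul_le_mul_of_nonneg_left (hFpt x hx) (Real.exp_pos _).le
        _ = θ * (Real.exp (-(η * (t - x))) * (|x| + 1)) := by ring
    -- conclude
    rw [Real.dist_eq, sub_zero, abs_abs, hDeq]
    have hDb : |F t - η * ∫ s in Set.Iic t, Real.exp (-(η * (t - s))) * F s| ≤ θ * A := by
      calc |F t - η * ∫ s in Set.Iic t, Real.exp (-(η * (t - s))) * F s| ≤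
          |F t| + η * |∫ s in Set.Iic t, Real.exp (-(η * (t - s))) * F s| := by
            have h0 : |F t - η * ∫ s in Set.Iic t, Real.exp (-(η * (t - s))) * F s| ≤
                |F t| + |η * ∫ s in Set.Iic t, Real.exp (-(η * (t - s))) * F s| :=
              abs_sub _ _
            rwa [abs_mul, abs_of_pos hη] at h0
        _ ≤ θ * (|t| + 1) + η * (θ * ∫ s in Set.Iic t, Real.exp (-(η * (t - s))) * (|s| + 1)) := by
            have h2 := mul_le_mul_of_nonneg_left hbnd hη.le
            have h3 := hFpt t le_rfl
            linarith
        _ = θ * A := by rw [hA]; ring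
    have : θ * A = ε' / 2 := by
      rw [hθdef]; field_simp
    calc |F t - η * ∫ s in Set.Iic t, Real.exp (-(η * (t - s))) * F s| ≤ θ * A := hDb
      _ = ε' / 2 := this
      _ < ε' := by linarith
  refine ⟨hIζ, hIω, ?_, ?_⟩
  · intro t ht
    have heq : ∀ δ : ℝ,
        (⨆ ε ∈ Set.Ioc (0:ℝ) 1,
          ‖(ε * ∫ s in Set.Iic t, Real.exp (-(η * (t - s))) * ζ δ s) • φ -
            (ε * (ω t - η * ∫ s in Set.Iic t, Real.exp (-(η * (t - s))) * ω s)) • φ‖) =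
        |(∫ s in Set.Iic t, Real.exp (-(η * (t - s))) * ζ δ s) -
          (ω t - η * ∫ s in Set.Iic t, Real.exp (-(η * (t - s))) * ω s)| * ‖φ‖ := by
      intro δ
      set I := ∫ s in Set.Iic t, Real.exp (-(η * (t - s))) * ζ δ s with hI
      set W := ω t - η * ∫ s in Set.Iic t, Real.exp (-(η * (t - s))) * ω s with hW
      have h1 : ∀ ε : ℝ, ε ∈ Set.Ioc (0:ℝ) 1 →
          ‖(ε * I) • φ - (ε * W) • φ‖ = ε * (|I - W| * ‖φ‖) := by
        intro ε hε
        rw [← sub_smul, norm_smul, Real.norm_eq_abs,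
          show ε * I - ε * W = ε * (I - W) by ring, abs_mul, abs_of_pos hε.1, mul_assoc]
      calc (⨆ ε ∈ Set.Ioc (0:ℝ) 1, ‖(ε * I) • φ - (ε * W) • φ‖)
          = ⨆ ε ∈ Set.Ioc (0:ℝ) 1, ε * (|I - W| * ‖φ‖) :=
            iSup_congr (fun ε => iSup_congr (fun hε => h1 ε hε))
        _ = |I - W| * ‖φ‖ := st6_sup_eps (by positivity)
    have h2 := (hDkey t ht).mul_const ‖φ‖
    rw [zero_mul] at h2
    exact h2.congr (fun δ => (heq δ).symm)
  · intro t ht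
    refine squeeze_zero'
      (g := fun de : ℝ × ℝ =>
        |(∫ s in Set.Iic t, Real.exp (-(η * (t - s))) * ζ de.1 s) -
          (ω t - η * ∫ s in Set.Iic t, Real.exp (-(η * (t - s))) * ω s)| * ‖φ‖)
      (Eventually.of_forall fun de => norm_nonneg _) ?_ ?_
    · have hev : ∀ᶠ de : ℝ × ℝ in (𝓝[>] 0) ×ˢ (𝓝[>] 0), de.2 ∈ Set.Ioc (0:ℝ) 1 :=
        tendsto_snd.eventually (eventually_of_mem
          (Ioc_mem_nhdsGT_of_mem ⟨le_refl (0:ℝ), one_pos⟩) fun _ h => h)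
      filter_upwards [hev] with de hde
      have h1 : ‖(de.2 * ∫ s in Set.Iic t, Real.exp (-(η * (t - s))) * ζ de.1 s) • φ -
          (de.2 * (ω t - η * ∫ s in Set.Iic t, Real.exp (-(η * (t - s))) * ω s)) • φ‖ =
          de.2 * (|(∫ s in Set.Iic t, Real.exp (-(η * (t - s))) * ζ de.1 s) -
            (ω t - η * ∫ s in Set.Iic t, Real.exp (-(η * (t - s))) * ω s)| * ‖φ‖) := by
        rw [← sub_smul, norm_smul, Real.norm_eq_abs, show
          de.2 * (∫ s in Set.Iic t, Real.exp (-(η * (t - s))) * ζ de.1 s) -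
            de.2 * (ω t - η * ∫ s in Set.Iic t, Real.exp (-(η * (t - s))) * ω s) =
          de.2 * ((∫ s in Set.Iic t, Real.exp (-(η * (t - s))) * ζ de.1 s) -
            (ω t - η * ∫ s in Set.Iic t, Real.exp (-(η * (t - s))) * ω s)) by ring,
          abs_mul, abs_of_pos hde.1, mul_assoc]
      rw [h1]
      exact mul_le_of_le_one_left (by positivity) hde.2
    · have h2 := (hDkey t ht).mul_const ‖φ‖
      rw [zero_mul] at h2
      exact h2.comp tendsto_fst
end

section
/- Let ω: ℝ → ℝ be continuous with ω(0) = 0, lim_{t→+∞} ω(t)/t = 0 and lim_{t→−∞} ω(t)/t = 0. Define x_0(t) := −∫_{−∞}^0 e^{r} (θ_tω)(r) dr. Then the integral converges absolutely for every t ∈ ℝ, the map t ↦ x_0(t) is continuous, and lim_{t→+∞} |x_0(t)|/|t| = 0 and lim_{t→−∞} |x_0(t)|/|t| = 0. -/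
open Filter Topology MeasureTheory

section OUAux
open Set

lemma ou_exp_half_cont : Continuous (fun x : ℝ => Real.exp (x / 2)) :=
  Real.continuous_exp.comp (continuous_id.div_const 2)

lemma ou_interval_exp_half (y : ℝ) :
    ∫ x in y..(0:ℝ), Real.exp (x / 2) = 2 - 2 * Real.exp (y / 2) := by
  rw [intervalIntegral.integral_comp_div (f := Real.exp) two_ne_zero, integral_exp]
  simp [smul_eq_mul]
  ring

lemma ou_integrableOn_exp_half : IntegrableOn (fun x : ℝ => Real.exp (x / 2)) (Iic 0) := by
  refine integrableOn_Iic_of_intervalIntegral_norm_bounded 2 0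
    (fun y => (ou_exp_half_cont).integrableOn_Ioc) tendsto_id ?_
  filter_upwards [eventually_le_atBot (0:ℝ)] with y hy
  have : ∀ x : ℝ, ‖Real.exp (x / 2)‖ = Real.exp (x / 2) := fun x =>
    Real.norm_of_nonneg (Real.exp_pos _).le
  simp_rw [this, ou_interval_exp_half, id_eq]
  nlinarith [Real.exp_pos (y / 2)]

lemma ou_integral_exp_half : ∫ x in Iic (0:ℝ), Real.exp (x / 2) = 2 := by
  refine tendsto_nhds_unique
    (intervalIntegral_tendsto_integral_Iic 0 ou_integrableOn_exp_half tendsto_id) ?_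
  simp_rw [ou_interval_exp_half]
  have h1 : Tendsto (fun y : ℝ => Real.exp (y / 2)) atBot (𝓝 0) :=
    Real.tendsto_exp_atBot.comp (tendsto_id.atBot_div_const two_pos)
  have := (h1.const_mul 2)
  simpa using tendsto_const_nhds.sub this

lemma ou_le_exp_half (x : ℝ) : x ≤ Real.exp (x / 2) := by
  have h1 := Real.add_one_le_exp (x / 4)
  have h2 : Real.exp (x / 4) * Real.exp (x / 4) = Real.exp (x / 2) := by
    rw [← Real.exp_add]; ring_nf
  rcases le_or_gt x 0 with hx | hx
  · exact hx.trans (Real.exp_pos _).le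
  · have hpos : (0:ℝ) < x / 4 + 1 := by linarith
    have h3 := mul_le_mul h1 h1 hpos.le (Real.exp_pos _).le
    nlinarith [sq_nonneg (x / 4 - 1)]

lemma ou_exp_mul_abs_le {r : ℝ} (hr : r ≤ 0) : Real.exp r * |r| ≤ Real.exp (r / 2) := by
  have h := ou_le_exp_half (-r)
  have habs : |r| = -r := abs_of_nonpos hr
  have hm : Real.exp r * (-r) ≤ Real.exp r * Real.exp (-r / 2) :=
    mul_le_mul_of_nonneg_left h (Real.exp_pos r).le
  have he : Real.exp r * Real.exp (-r / 2) = Real.exp (r / 2) := by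
    rw [← Real.exp_add]; ring_nf
  rw [habs]; linarith [he ▸ hm]

lemma ou_exp_key {r a : ℝ} (hr : r ≤ 0) (ha : 0 ≤ a) :
    Real.exp r * (|r| + a) ≤ (1 + a) * Real.exp (r / 2) := by
  have h1 := ou_exp_mul_abs_le hr
  have h2 : Real.exp r ≤ Real.exp (r / 2) := Real.exp_le_exp.mpr (by linarith)
  nlinarith [Real.exp_pos r, Real.exp_pos (r / 2)]

lemma ou_sublinear (ω : ℝ → ℝ) (hωc : Continuous ω)
    (htop : Tendsto (fun t => ω t / t) atTop (𝓝 0))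
    (hbot : Tendsto (fun t => ω t / t) atBot (𝓝 0))
    {ε : ℝ} (hε : 0 < ε) : ∃ C : ℝ, 0 ≤ C ∧ ∀ s, |ω s| ≤ ε * |s| + C := by
  have h1 : ∀ᶠ t in atTop, |ω t| / |t| < ε := by
    have := Metric.tendsto_nhds.mp htop ε hε
    simpa [Real.dist_eq, abs_div] using this
  have h2 : ∀ᶠ t in atBot, |ω t| / |t| < ε := by
    have := Metric.tendsto_nhds.mp hbot ε hε
    simpa [Real.dist_eq, abs_div] using this
  obtain ⟨A, hA⟩ := h1.exists_forall_of_atTop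
  obtain ⟨B, hB⟩ := h2.exists_forall_of_atBot
  set A' : ℝ := max A 1 with hA'
  set B' : ℝ := min B (-1) with hB'
  obtain ⟨M, hM⟩ := (isCompact_Icc (a := B') (b := A')).exists_bound_of_continuousOn
    hωc.continuousOn
  refine ⟨max M 0, le_max_right _ _, fun s => ?_⟩
  by_cases hs : s ∈ Icc B' A'
  · have := hM s hs
    have h := this.trans (le_max_left M 0)
    calc |ω s| ≤ max M 0 := by simpa [Real.norm_eq_abs] using h
      _ ≤ ε * |s| + max M 0 := by nlinarith [abs_nonneg s, mul_nonneg hε.le (abs_nonneg s)]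
  · have hout : A' < s ∨ s < B' := by
      by_contra hcon
      push_neg at hcon
      exact hs (mem_Icc.mpr ⟨hcon.2, hcon.1⟩)
    have hsne : s ≠ 0 := by
      rcases hout with h | h
      · have : (1:ℝ) ≤ A' := le_max_right _ _
        intro hc; rw [hc] at h; linarith
      · have : B' ≤ -1 := min_le_right _ _
        intro hc; rw [hc] at h; linarith
    have hdiv : |ω s| / |s| < ε := by
      rcases hout with h | h
      · exact hA s ((le_max_left A 1).trans h.le)
      · exact hB s (h.le.trans (min_le_left B (-1)))
    have : |ω s| < ε * |s| := by
      have hspos : 0 < |s| := abs_pos.mpr hsne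
      calc |ω s| = |ω s| / |s| * |s| := by field_simp
        _ < ε * |s| := mul_lt_mul_of_pos_right hdiv hspos
    nlinarith [le_max_right M 0]

end OUAux

/-- For a continuous `ω : ℝ → ℝ` with `ω 0 = 0` and `ω t / t → 0`
as `t → ±∞`, the pathwise Ornstein-Uhlenbeck process
`x₀(t) = -∫_{-∞}^0 e^{r} (θ_t ω)(r) dr` (with `(θ_t ω)(r) = ω (r+t) - ω t`) is
well defined (the integral converges absolutely), continuous in `t`, and satisfies
`|x₀(t)|/|t| → 0` as `t → ±∞`. -/
theorem statement13 (ω : ℝ → ℝ) (hωc : Continuous ω) (hω0 : ω 0 = 0)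
    (htop : Tendsto (fun t => ω t / t) atTop (𝓝 0))
    (hbot : Tendsto (fun t => ω t / t) atBot (𝓝 0)) :
    (∀ t : ℝ,
      IntegrableOn (fun r => Real.exp r * (ω (r + t) - ω t)) (Set.Iic 0) volume) ∧
    Continuous (fun t => -∫ r in Set.Iic (0 : ℝ), Real.exp r * (ω (r + t) - ω t)) ∧
    Tendsto (fun t => |-∫ r in Set.Iic (0 : ℝ), Real.exp r * (ω (r + t) - ω t)| / |t|)
      atTop (𝓝 0) ∧
    Tendsto (fun t => |-∫ r in Set.Iic (0 : ℝ), Real.exp r * (ω (r + t) - ω t)| / |t|)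
      atBot (𝓝 0) := by
  obtain ⟨C₀, hC₀0, hC₀⟩ := ou_sublinear ω hωc htop hbot one_pos
  -- pointwise bound
  have hpt : ∀ (ε C : ℝ), 0 < ε → 0 ≤ C → (∀ s, |ω s| ≤ ε * |s| + C) →
      ∀ (t r : ℝ), r ≤ 0 →
      ‖Real.exp r * (ω (r + t) - ω t)‖ ≤ (ε + (2 * ε * |t| + 2 * C)) * Real.exp (r / 2) := by
    intro ε C hε hC hω t r hr
    set D : ℝ := 2 * ε * |t| + 2 * C with hD
    have hD0 : 0 ≤ D := by
      have := mul_nonneg (mul_nonneg (by norm_num : (0:ℝ) ≤ 2) hε.le) (abs_nonneg t)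
      simp only [hD]; linarith
    have h1 : |ω (r + t) - ω t| ≤ ε * |r| + D := by
      have ha := hω (r + t); have hb := hω t
      have hab : |ω (r + t) - ω t| ≤ |ω (r + t)| + |ω t| := abs_sub _ _
      have htr : |r + t| ≤ |r| + |t| := abs_add_le r t
      have : ε * |r + t| ≤ ε * (|r| + |t|) := mul_le_mul_of_nonneg_left htr hε.le
      simp only [hD]; nlinarith
    have h2 : ‖Real.exp r * (ω (r + t) - ω t)‖ = Real.exp r * |ω (r + t) - ω t| := by
      rw [Real.norm_eq_abs, abs_mul, abs_of_pos (Real.exp_pos r)]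
    rw [h2]
    have h3 := ou_exp_mul_abs_le hr
    have h4 : Real.exp r ≤ Real.exp (r / 2) := Real.exp_le_exp.mpr (by linarith)
    have h5 : Real.exp r * |ω (r + t) - ω t| ≤ Real.exp r * (ε * |r| + D) :=
      mul_le_mul_of_nonneg_left h1 (Real.exp_pos r).le
    have h6 := mul_le_mul_of_nonneg_left h3 hε.le
    have h7 := mul_le_mul_of_nonneg_left h4 hD0
    calc Real.exp r * |ω (r + t) - ω t| ≤ Real.exp r * (ε * |r| + D) := h5
      _ = ε * (Real.exp r * |r|) + D * Real.exp r := by ring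
      _ ≤ ε * Real.exp (r / 2) + D * Real.exp (r / 2) := by linarith
      _ = (ε + D) * Real.exp (r / 2) := by ring
  -- Part 1: integrability
  have hint : ∀ t : ℝ, IntegrableOn (fun r => Real.exp r * (ω (r + t) - ω t))
      (Set.Iic 0) volume := by
    intro t
    have hmeas : AEStronglyMeasurable (fun r => Real.exp r * (ω (r + t) - ω t))
        (volume.restrict (Set.Iic 0)) :=
      (Real.continuous_exp.mul
        ((hωc.comp (continuous_id.add continuous_const)).sub continuous_const)).aestronglyMeasurable
    refine Integrable.mono'
      (ou_integrableOn_exp_half.const_mul ((1 : ℝ) + (2 * 1 * |t| + 2 * C₀))) hmeas ?_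
    filter_upwards [ae_restrict_mem measurableSet_Iic] with r hr
    exact hpt 1 C₀ one_pos hC₀0 hC₀ t r hr
  -- integral norm bound
  have hIb : ∀ (ε C : ℝ), 0 < ε → 0 ≤ C → (∀ s, |ω s| ≤ ε * |s| + C) → ∀ t : ℝ,
      |∫ r in Set.Iic (0:ℝ), Real.exp r * (ω (r + t) - ω t)|
        ≤ (ε + (2 * ε * |t| + 2 * C)) * 2 := by
    intro ε C hε hC hω t
    have h := norm_integral_le_of_norm_le
      (ou_integrableOn_exp_half.const_mul (ε + (2 * ε * |t| + 2 * C)))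
      (by filter_upwards [ae_restrict_mem measurableSet_Iic] with r hr
          exact hpt ε C hε hC hω t r hr)
    rw [Real.norm_eq_abs] at h
    calc |∫ r in Set.Iic (0:ℝ), Real.exp r * (ω (r + t) - ω t)|
        ≤ ∫ r in Set.Iic (0:ℝ), (ε + (2 * ε * |t| + 2 * C)) * Real.exp (r / 2) := h
      _ = (ε + (2 * ε * |t| + 2 * C)) * ∫ r in Set.Iic (0:ℝ), Real.exp (r / 2) :=
          integral_const_mul _ _
      _ = (ε + (2 * ε * |t| + 2 * C)) * 2 := by rw [ou_integral_exp_half]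
  -- auxiliary function g
  set g : ℝ → ℝ := fun s => Real.exp s * ω s with hgdef
  have hg_cont : Continuous g := Real.continuous_exp.mul hωc
  have hg1 : IntegrableOn g (Set.Iic (0:ℝ)) := by
    refine Integrable.mono' (ou_integrableOn_exp_half.const_mul (1 + C₀))
      hg_cont.aestronglyMeasurable ?_
    filter_upwards [ae_restrict_mem measurableSet_Iic] with r hr
    have h1 : |ω r| ≤ 1 * |r| + C₀ := hC₀ r
    calc ‖g r‖ = Real.exp r * |ω r| := by
          rw [Real.norm_eq_abs, hgdef, abs_mul, abs_of_pos (Real.exp_pos r)]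
      _ ≤ Real.exp r * (|r| + C₀) :=
          mul_le_mul_of_nonneg_left (by linarith) (Real.exp_pos r).le
      _ ≤ (1 + C₀) * Real.exp (r / 2) := ou_exp_key hr hC₀0
  have hgInt : ∀ t : ℝ, IntegrableOn g (Set.Iic t) := by
    intro t
    have h2 : IntegrableOn g (Set.Icc (0:ℝ) (max t 0)) := hg_cont.integrableOn_Icc
    have hsub : Set.Iic t ⊆ Set.Iic 0 ∪ Set.Icc 0 (max t 0) := by
      intro x hx
      rcases le_or_gt x 0 with h | h
      · exact Or.inl h
      · exact Or.inr ⟨h.le, le_trans hx (le_max_left t 0)⟩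
    exact (hg1.union h2).mono_set hsub
  -- translation
  have hshift : ∀ t : ℝ, (Set.Iic (0:ℝ)).indicator (fun r => g (r + t))
      = fun r => (Set.Iic t).indicator g (r + t) := by
    intro t; funext r
    have hiff : r + t ≤ t ↔ r ≤ 0 := by constructor <;> intro h <;> linarith
    simp only [Set.indicator_apply, Set.mem_Iic, hiff]
  have hItrans : ∀ t : ℝ, IntegrableOn (fun r => g (r + t)) (Set.Iic (0:ℝ)) := by
    intro t
    have h : Integrable ((Set.Iic (0:ℝ)).indicator fun r => g (r + t)) volume := by
      rw [hshift t]
      exact ((integrable_indicator_iff measurableSet_Iic).mpr (hgInt t)).comp_add_right t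
    exact (integrable_indicator_iff measurableSet_Iic).mp h
  have hkeyInt : ∀ t : ℝ, ∫ r in Set.Iic (0:ℝ), g (r + t) = ∫ s in Set.Iic t, g s := by
    intro t
    calc ∫ r in Set.Iic (0:ℝ), g (r + t)
        = ∫ r, (Set.Iic (0:ℝ)).indicator (fun r => g (r + t)) r :=
          (integral_indicator measurableSet_Iic).symm
      _ = ∫ r, (Set.Iic t).indicator g (r + t) := by rw [hshift t]
      _ = ∫ r, (Set.Iic t).indicator g r := integral_add_right_eq_self _ t
      _ = ∫ s in Set.Iic t, g s := integral_indicator measurableSet_Iic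
  -- the key identity
  have hx0 : ∀ t : ℝ, ∫ r in Set.Iic (0:ℝ), Real.exp r * (ω (r + t) - ω t)
      = Real.exp (-t) * (∫ s in Set.Iic t, g s) - ω t := by
    intro t
    have e1 : (fun r => Real.exp r * ω (r + t)) = fun r => Real.exp (-t) * g (r + t) := by
      funext r
      show Real.exp r * ω (r + t) = Real.exp (-t) * (Real.exp (r + t) * ω (r + t))
      rw [← mul_assoc, ← Real.exp_add]
      have hrt : -t + (r + t) = r := by ring
      rw [hrt]
    have i1 : IntegrableOn (fun r => Real.exp r * ω (r + t)) (Set.Iic (0:ℝ)) := by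
      rw [e1]; exact (hItrans t).const_mul _
    have i2 : IntegrableOn (fun r => Real.exp r * ω t) (Set.Iic (0:ℝ)) :=
      (integrableOn_exp_Iic 0).mul_const _
    have hsplit : ∫ r in Set.Iic (0:ℝ), Real.exp r * (ω (r + t) - ω t)
        = (∫ r in Set.Iic (0:ℝ), Real.exp r * ω (r + t))
          - ∫ r in Set.Iic (0:ℝ), Real.exp r * ω t := by
      rw [← integral_sub i1 i2]
      congr 1; funext r; ring
    have h2 : ∫ r in Set.Iic (0:ℝ), Real.exp r * ω t = ω t := by
      rw [integral_mul_const]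
      rw [integral_exp_Iic_zero, one_mul]
    have h3 : ∫ r in Set.Iic (0:ℝ), Real.exp r * ω (r + t)
        = Real.exp (-t) * ∫ s in Set.Iic t, g s := by
      rw [e1, integral_const_mul, hkeyInt t]
    rw [hsplit, h2, h3]
  -- continuity
  have hGcont : Continuous (fun t => ∫ s in Set.Iic t, g s) := by
    have hprim := intervalIntegral.continuous_primitive
      (fun a b => hg_cont.intervalIntegrable (μ := volume) a b) 0
    have heq : ∀ t : ℝ, ∫ s in Set.Iic t, g s
        = (∫ s in Set.Iic (0:ℝ), g s) + ∫ s in (0:ℝ)..t, g s := by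
      intro t
      rw [← intervalIntegral.integral_Iic_sub_Iic hg1 (hgInt t)]
      ring
    exact (continuous_const.add hprim).congr fun t => (heq t).symm
  have hcont : Continuous (fun t => -∫ r in Set.Iic (0:ℝ), Real.exp r * (ω (r + t) - ω t)) := by
    have heq : (fun t => -∫ r in Set.Iic (0:ℝ), Real.exp r * (ω (r + t) - ω t))
        = fun t => -(Real.exp (-t) * (∫ s in Set.Iic t, g s) - ω t) := by
      funext t; rw [hx0 t]
    rw [heq]
    exact (((Real.continuous_exp.comp continuous_neg).mul hGcont).sub hωc).neg
  -- limits
  have hR : ∀ ε : ℝ, 0 < ε → ∃ R : ℝ, 0 < R ∧ ∀ t : ℝ, R ≤ |t| →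
      |∫ r in Set.Iic (0:ℝ), Real.exp r * (ω (r + t) - ω t)| / |t| < ε := by
    intro ε hε
    obtain ⟨C, hCC0, hCC⟩ := ou_sublinear ω hωc htop hbot (show (0:ℝ) < ε / 8 by linarith)
    set K : ℝ := ε / 4 + 4 * C with hK
    have hK0 : 0 ≤ K := by simp only [hK]; linarith
    have hR0 : (0:ℝ) < 2 * K / ε + 1 := by
      have : (0:ℝ) ≤ 2 * K / ε := div_nonneg (by linarith) hε.le
      linarith
    refine ⟨2 * K / ε + 1, hR0, fun t ht => ?_⟩
    have htpos : 0 < |t| := lt_of_lt_of_le hR0 ht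
    have hb := hIb (ε / 8) C (by linarith) hCC0 hCC t
    have hb' : |∫ r in Set.Iic (0:ℝ), Real.exp r * (ω (r + t) - ω t)|
        ≤ ε / 2 * |t| + K := by simp only [hK]; nlinarith
    rw [div_lt_iff₀ htpos]
    have h1 : K < ε / 2 * |t| := by
      have h2 : ε / 2 * (2 * K / ε + 1) = K + ε / 2 := by field_simp
      have h3 := mul_le_mul_of_nonneg_left ht (by linarith : (0:ℝ) ≤ ε / 2)
      nlinarith
    nlinarith
  have habs : ∀ t : ℝ,
      |-∫ r in Set.Iic (0:ℝ), Real.exp r * (ω (r + t) - ω t)|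
        = |∫ r in Set.Iic (0:ℝ), Real.exp r * (ω (r + t) - ω t)| := fun t => abs_neg _
  refine ⟨hint, hcont, ?_, ?_⟩
  · rw [Metric.tendsto_nhds]
    intro ε hε
    obtain ⟨R, hR0, hRa⟩ := hR ε hε
    filter_upwards [eventually_ge_atTop R] with t ht
    have hle : R ≤ |t| := ht.trans (le_abs_self t)
    have := hRa t hle
    rw [Real.dist_eq, sub_zero, abs_of_nonneg (by positivity), habs t]
    exact this
  · rw [Metric.tendsto_nhds]
    intro ε hε
    obtain ⟨R, hR0, hRa⟩ := hR ε hε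
    filter_upwards [eventually_le_atBot (-R)] with t ht
    have hle : R ≤ |t| := by
      rw [abs_of_nonpos (by linarith)]; linarith
    have := hRa t hle
    rw [Real.dist_eq, sub_zero, abs_of_nonneg (by positivity), habs t]
    exact this
end

section
/- Let ω: ℝ → ℝ be continuous with ω(0) = 0 and |ω(s)| ≤ C̄(|s| + 1) for all s ∈ ℝ, for some C̄ ≥ 0. For δ ∈ (0,1] define ξ_δ(t) := −δ^{−2} ∫_{−∞}^0 e^{s/δ} (θ_tω)(s) ds. Then the integral converges absolutely for every t, and for every T > 0, lim_{δ→0⁺} sup_{|t| ≤ T} | ∫_0^t ξ_δ(r) dr − ω(t) | = 0. -/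
open Filter Topology MeasureTheory


lemma integrableOn_exp_div {c : ℝ} (hc : 0 < c) (a : ℝ) :
    IntegrableOn (fun s : ℝ => Real.exp (s / c)) (Set.Iic a) := by
  have hg : Integrable ((Set.Iic (a / c)).indicator Real.exp) := by
    rw [integrable_indicator_iff measurableSet_Iic]
    exact integrableOn_exp_Iic _
  have h2 : Integrable (fun x : ℝ => ((Set.Iic (a / c)).indicator Real.exp) (x / c)) :=
    hg.comp_div hc.ne'
  have heq : (fun x : ℝ => ((Set.Iic (a / c)).indicator Real.exp) (x / c))
      = (Set.Iic a).indicator (fun s => Real.exp (s / c)) := by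
    ext x
    by_cases hx : x ≤ a
    · rw [Set.indicator_of_mem (by simpa using (div_le_div_iff_of_pos_right hc).2 hx : x / c ∈ Set.Iic (a / c)),
        Set.indicator_of_mem (Set.mem_Iic.2 hx)]
    · rw [Set.indicator_of_notMem, Set.indicator_of_notMem (by simpa using hx)]
      simp only [Set.mem_Iic, not_le] at hx ⊢
      exact (div_lt_div_iff_of_pos_right hc).2 hx
  exact (integrable_indicator_iff measurableSet_Iic).1 (heq ▸ h2)

lemma integral_exp_div {c : ℝ} (hc : 0 < c) (a : ℝ) :
    ∫ s in Set.Iic a, Real.exp (s / c) = c * Real.exp (a / c) := by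
  have hderiv : ∀ x ∈ Set.Iic a,
      HasDerivAt (fun s => c * Real.exp (s / c)) (Real.exp (x / c)) x := by
    intro x _
    have h1 : HasDerivAt (fun s : ℝ => s / c) (1 / c) x := by
      simpa using (hasDerivAt_id x).div_const c
    have h2 := ((Real.hasDerivAt_exp (x / c)).comp x h1).const_mul c
    refine h2.congr_deriv ?_
    field_simp
  have hlim : Tendsto (fun s => c * Real.exp (s / c)) atBot (𝓝 0) := by
    have h1 : Tendsto (fun s : ℝ => s / c) atBot atBot := tendsto_id.atBot_div_const hc
    have := (Real.tendsto_exp_atBot.comp h1).const_mul c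
    simpa using this
  rw [MeasureTheory.integral_Iic_of_hasDerivAt_of_tendsto' hderiv
    (integrableOn_exp_div hc a) hlim]
  ring

lemma neg_mul_exp_le {c : ℝ} (hc : 0 < c) {x : ℝ} (hx : x ≤ 0) :
    -x * Real.exp (x / c) ≤ c := by
  have h1 : -x / c ≤ Real.exp (-x / c) := by
    have := Real.add_one_le_exp (-x / c)
    linarith
  have h2 : Real.exp (x / c) = (Real.exp (-x / c))⁻¹ := by
    rw [← Real.exp_neg]; ring_nf
  rw [h2]
  rw [mul_inv_le_iff₀ (Real.exp_pos _)]
  calc -x = c * (-x / c) := by field_simp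
  _ ≤ c * Real.exp (-x / c) := by
      apply mul_le_mul_of_nonneg_left h1 hc.le
  _ = c * Real.exp (-x / c) := rfl

lemma one_add_abs_mul_exp_le {c a : ℝ} (hc : 0 < c) {s : ℝ} (hs : s ≤ a) :
    (1 + |s|) * Real.exp ((s - a) / c) ≤ 1 + |a| + c := by
  have hx : s - a ≤ 0 := by linarith
  have h1 : -(s - a) * Real.exp ((s - a) / c) ≤ c := neg_mul_exp_le hc hx
  have h2 : Real.exp ((s - a) / c) ≤ 1 := Real.exp_le_one_iff.2 (by
    apply div_nonpos_of_nonpos_of_nonneg hx hc.le)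
  have h3 : |s| ≤ |a| + (a - s) := by
    rcases abs_cases s with ⟨h, _⟩ | ⟨h, _⟩ <;> rcases abs_cases a with ⟨h', _⟩ | ⟨h', _⟩ <;>
      linarith
  have hexp : 0 < Real.exp ((s - a) / c) := Real.exp_pos _
  calc (1 + |s|) * Real.exp ((s - a) / c)
      ≤ (1 + |a| + (a - s)) * Real.exp ((s - a) / c) :=
        mul_le_mul_of_nonneg_right (by linarith) hexp.le
    _ = (1 + |a|) * Real.exp ((s - a) / c) + (a - s) * Real.exp ((s - a) / c) := by ring
    _ ≤ (1 + |a|) * 1 + c := by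
        have hb := mul_le_mul_of_nonneg_left h2 (by positivity : (0:ℝ) ≤ 1 + |a|)
        have h1' : (a - s) * Real.exp ((s - a) / c) ≤ c := by
          have : -(s - a) = a - s := by ring
          linarith [h1]
        linarith
    _ = 1 + |a| + c := by ring

lemma integrableOn_exp_div_mul {c K : ℝ} (a : ℝ) (hc : 0 < c) (hK : 0 ≤ K) {f : ℝ → ℝ}
    (hf : Continuous f) (hbd : ∀ s, |f s| ≤ K * (1 + |s|)) :
    IntegrableOn (fun s => Real.exp (s / c) * f s) (Set.Iic a) := by
  have h2c : (0:ℝ) < 2 * c := by positivity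
  set M : ℝ := K * (1 + |a| + 2 * c) * Real.exp (a / (2 * c)) with hM
  apply Integrable.mono' (g := fun s => M * Real.exp (s / (2 * c)))
      (((integrableOn_exp_div h2c a)).const_mul M)
  · exact ((Real.continuous_exp.comp (continuous_id.div_const c)).mul hf).aestronglyMeasurable
  · rw [ae_restrict_iff' measurableSet_Iic]
    apply Filter.Eventually.of_forall
    intro s hs
    have hs' : s ≤ a := hs
    have hsplit : Real.exp (s / c) = Real.exp (s / (2 * c)) * Real.exp (s / (2 * c)) := by
      rw [← Real.exp_add]
      congr 1
      field_simp
      ring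
    have hb1 : (1 + |s|) * Real.exp ((s - a) / (2 * c)) ≤ 1 + |a| + 2 * c :=
      one_add_abs_mul_exp_le h2c hs'
    have hsa : Real.exp (s / (2 * c)) = Real.exp ((s - a) / (2 * c)) * Real.exp (a / (2 * c)) := by
      rw [← Real.exp_add]; congr 1; field_simp; ring
    have hexp1 : (0:ℝ) < Real.exp (s / (2 * c)) := Real.exp_pos _
    have hexpa : (0:ℝ) < Real.exp (a / (2 * c)) := Real.exp_pos _
    calc ‖Real.exp (s / c) * f s‖ = Real.exp (s / c) * |f s| := by
          rw [Real.norm_eq_abs, abs_mul, abs_of_pos (Real.exp_pos _)]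
      _ ≤ Real.exp (s / c) * (K * (1 + |s|)) :=
          mul_le_mul_of_nonneg_left (hbd s) (Real.exp_pos _).le
      _ = K * ((1 + |s|) * Real.exp ((s - a) / (2 * c))) * Real.exp (a / (2 * c))
            * Real.exp (s / (2 * c)) := by
          rw [hsplit]
          nth_rewrite 2 [hsa]
          ring
      _ ≤ M * Real.exp (s / (2 * c)) := by
          apply mul_le_mul_of_nonneg_right _ hexp1.le
          rw [hM]
          apply mul_le_mul_of_nonneg_right _ hexpa.le
          exact mul_le_mul_of_nonneg_left hb1 hK

lemma setIntegral_Iic_add (g : ℝ → ℝ) (b r : ℝ) :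
    ∫ s in Set.Iic b, g (s + r) = ∫ u in Set.Iic (b + r), g u := by
  have h := MeasureTheory.integral_add_right_eq_self (μ := volume)
    ((Set.Iic (b + r)).indicator g) r
  rw [← MeasureTheory.integral_indicator measurableSet_Iic,
    ← MeasureTheory.integral_indicator measurableSet_Iic, ← h]
  congr 1
  ext s
  by_cases hs : s ≤ b
  · rw [Set.indicator_of_mem (Set.mem_Iic.2 hs),
      Set.indicator_of_mem (Set.mem_Iic.2 (by linarith : s + r ≤ b + r))]
  · rw [Set.indicator_of_notMem (by simpa using hs),
      Set.indicator_of_notMem (by simp only [Set.mem_Iic, not_le] at hs ⊢; linarith)]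

lemma S14_main_eq (ω : ℝ → ℝ) (hωc : Continuous ω) (hω0 : ω 0 = 0) (C : ℝ) (hC : 0 ≤ C)
    (hωbd : ∀ s : ℝ, |ω s| ≤ C * (|s| + 1)) {δ : ℝ} (hδ : 0 < δ) (t : ℝ) :
    (∫ r in (0:ℝ)..t, -δ⁻¹ ^ 2 * ∫ s in Set.Iic (0:ℝ), Real.exp (s / δ) * (ω (s + r) - ω r)) - ω t
      = δ⁻¹ * (∫ s in Set.Iic (0:ℝ), Real.exp (s / δ) * (ω (s + t) - ω t))
        - δ⁻¹ * (∫ s in Set.Iic (0:ℝ), Real.exp (s / δ) * (ω (s + 0) - ω 0)) := by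
  have hδne : δ ≠ 0 := hδ.ne'
  set I : ℝ → ℝ := fun r => ∫ u in Set.Iic r, Real.exp (u / δ) * ω u with hI
  have hfc : Continuous (fun u : ℝ => Real.exp (u / δ) * ω u) :=
    (Real.continuous_exp.comp (continuous_id.div_const δ)).mul hωc
  have hωbd' : ∀ s : ℝ, |ω s| ≤ C * (1 + |s|) := by
    intro s
    calc |ω s| ≤ C * (|s| + 1) := hωbd s
    _ = C * (1 + |s|) := by ring
  have hIint : ∀ r : ℝ, IntegrableOn (fun u => Real.exp (u / δ) * ω u) (Set.Iic r) :=
    fun r => integrableOn_exp_div_mul r hδ hC hωc hωbd'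
  have hshiftbd : ∀ r s : ℝ, |ω (s + r)| ≤ (C * (1 + |r|)) * (1 + |s|) := by
    intro r s
    have h1 := hωbd (s + r)
    have h4 : |s + r| ≤ |s| + |r| := abs_add_le _ _
    nlinarith [mul_nonneg (mul_nonneg hC (abs_nonneg r)) (abs_nonneg s),
      mul_le_mul_of_nonneg_left h4 hC, abs_nonneg s, abs_nonneg r]
  have hshiftint : ∀ r : ℝ, IntegrableOn (fun s => Real.exp (s / δ) * ω (s + r)) (Set.Iic 0) :=
    fun r => integrableOn_exp_div_mul 0 hδ (by positivity)
      (hωc.comp (continuous_id.add continuous_const)) (hshiftbd r)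
  have hJeq : ∀ r : ℝ, (∫ s in Set.Iic (0:ℝ), Real.exp (s / δ) * (ω (s + r) - ω r))
      = Real.exp (-r / δ) * I r - δ * ω r := by
    intro r
    simp only [mul_sub]
    rw [MeasureTheory.integral_sub (hshiftint r)
      ((integrableOn_exp_div hδ 0).mul_const (ω r))]
    congr 1
    · have h1 : ∀ s : ℝ, Real.exp (s / δ) * ω (s + r)
          = Real.exp (-r / δ) * (Real.exp ((s + r) / δ) * ω (s + r)) := by
        intro s
        rw [← mul_assoc, ← Real.exp_add]
        congr 2
        field_simp
        ring
      simp_rw [h1]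
      rw [MeasureTheory.integral_const_mul,
        setIntegral_Iic_add (fun u => Real.exp (u / δ) * ω u) 0 r, zero_add]
    · rw [MeasureTheory.integral_mul_const, integral_exp_div hδ 0]
      simp [Real.exp_zero]
  have hIfun : I = fun r => I 0 + ∫ u in (0:ℝ)..r, Real.exp (u / δ) * ω u := by
    funext r
    have h := intervalIntegral.integral_Iic_sub_Iic (hIint 0) (hIint r)
    simp only [hI]
    linarith [h]
  have hIderiv : ∀ r : ℝ, HasDerivAt I (Real.exp (r / δ) * ω r) r := by
    intro r
    rw [hIfun]
    exact (intervalIntegral.integral_hasDerivAt_right (hfc.intervalIntegrable 0 r)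
      (hfc.stronglyMeasurableAtFilter volume (𝓝 r)) hfc.continuousAt).const_add (I 0)
  have hη : ∀ r : ℝ, HasDerivAt (fun x => δ⁻¹ * (Real.exp (-x / δ) * I x))
      (-δ⁻¹ ^ 2 * ∫ s in Set.Iic (0:ℝ), Real.exp (s / δ) * (ω (s + r) - ω r)) r := by
    intro r
    have h0 : HasDerivAt (fun x : ℝ => -x / δ) (-1 / δ) r := by
      simpa using (hasDerivAt_id r).neg.div_const δ
    have h1 : HasDerivAt (fun x : ℝ => Real.exp (-x / δ))
        (Real.exp (-r / δ) * (-1 / δ)) r := (Real.hasDerivAt_exp _).comp r h0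
    have h2 := (h1.mul (hIderiv r)).const_mul δ⁻¹
    refine h2.congr_deriv ?_
    rw [hJeq r]
    have hee : Real.exp (-r / δ) * Real.exp (r / δ) = 1 := by
      rw [← Real.exp_add, show -r / δ + r / δ = 0 from by ring, Real.exp_zero]
    rw [show Real.exp (-r / δ) * (Real.exp (r / δ) * ω r) = ω r from by
      rw [← mul_assoc, hee, one_mul]]
    field_simp
    ring
  have hJc : Continuous (fun r : ℝ => ∫ s in Set.Iic (0:ℝ),
      Real.exp (s / δ) * (ω (s + r) - ω r)) := by
    rw [show (fun r : ℝ => ∫ s in Set.Iic (0:ℝ), Real.exp (s / δ) * (ω (s + r) - ω r))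
        = fun r => Real.exp (-r / δ) * I r - δ * ω r from funext hJeq]
    have hIc : Continuous I := continuous_iff_continuousAt.2 fun r => (hIderiv r).continuousAt
    exact ((Real.continuous_exp.comp (continuous_id.neg.div_const δ)).mul hIc).sub
      (continuous_const.mul hωc)
  have hFTC := intervalIntegral.integral_eq_sub_of_hasDerivAt (f := fun x => δ⁻¹ * (Real.exp (-x / δ) * I x))
    (fun r _ => hη r) ((continuous_const.mul hJc).intervalIntegrable 0 t)
  rw [hFTC, hJeq t]
  have hJ0 : (∫ s in Set.Iic (0:ℝ), Real.exp (s / δ) * (ω (s + 0) - ω 0))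
      = Real.exp (-0 / δ) * I 0 - δ * ω 0 := hJeq 0
  rw [hJ0, hω0]
  field_simp
  ring

lemma S14_J_bound (ω : ℝ → ℝ) (hωc : Continuous ω) (C : ℝ) (hC : 0 ≤ C)
    (hωbd : ∀ s : ℝ, |ω s| ≤ C * (|s| + 1)) {δ T h ε : ℝ}
    (hδ0 : 0 < δ) (hδ1 : δ ≤ 1) (hT : 0 < T) (hh0 : 0 < h) (hh1 : h ≤ 1) (hε : 0 ≤ ε)
    (hmod : ∀ t ∈ Set.Icc (-T) T, ∀ s ∈ Set.Icc (-h) (0:ℝ), |ω (s + t) - ω t| ≤ ε)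
    {t : ℝ} (ht : t ∈ Set.Icc (-T) T) :
    δ⁻¹ * |∫ s in Set.Iic (0:ℝ), Real.exp (s / δ) * (ω (s + t) - ω t)|
      ≤ ε + 6 * (C * (2 * T + 2)) * Real.exp (-h / (2 * δ)) := by
  have h2δ : (0:ℝ) < 2 * δ := by positivity
  have habsT : |t| ≤ T := abs_le.2 ht
  set Kt : ℝ := C * (2 * T + 2) with hKt
  have hKt0 : 0 ≤ Kt := by positivity
  have hFc : Continuous (fun s : ℝ => Real.exp (s / δ) * (ω (s + t) - ω t)) :=
    (Real.continuous_exp.comp (continuous_id.div_const δ)).mul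
      ((hωc.comp (continuous_id.add continuous_const)).sub continuous_const)
  have hFbd : ∀ s : ℝ, |ω (s + t) - ω t| ≤ Kt * (1 + |s|) := by
    intro s
    have h1 := hωbd (s + t)
    have h2 := hωbd t
    have h3 : |ω (s + t) - ω t| ≤ |ω (s + t)| + |ω t| := abs_sub _ _
    have h4 : |s + t| ≤ |s| + |t| := abs_add_le _ _
    nlinarith [abs_nonneg s, abs_nonneg t, mul_le_mul_of_nonneg_left habsT hC,
      mul_nonneg hC (abs_nonneg s), mul_le_mul_of_nonneg_left habsT
        (mul_nonneg hC (abs_nonneg s))]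
  have hint0 : IntegrableOn (fun s => Real.exp (s / δ) * (ω (s + t) - ω t)) (Set.Iic 0) :=
    integrableOn_exp_div_mul 0 hδ0 hKt0
      ((hωc.comp (continuous_id.add continuous_const)).sub continuous_const) hFbd
  have hinth : IntegrableOn (fun s => Real.exp (s / δ) * (ω (s + t) - ω t)) (Set.Iic (-h)) :=
    integrableOn_exp_div_mul (-h) hδ0 hKt0
      ((hωc.comp (continuous_id.add continuous_const)).sub continuous_const) hFbd
  have hsplit : (∫ s in Set.Iic (0:ℝ), Real.exp (s / δ) * (ω (s + t) - ω t))
      = (∫ s in Set.Iic (-h), Real.exp (s / δ) * (ω (s + t) - ω t))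
        + ∫ s in (-h)..(0:ℝ), Real.exp (s / δ) * (ω (s + t) - ω t) := by
    have := intervalIntegral.integral_Iic_sub_Iic hinth hint0
    linarith
  -- tail bound
  have htail : |∫ s in Set.Iic (-h), Real.exp (s / δ) * (ω (s + t) - ω t)|
      ≤ 3 * Kt * (2 * δ * Real.exp (-h / (2 * δ))) := by
    have hg : Integrable (fun s => 3 * Kt * Real.exp (s / (2 * δ)))
        (volume.restrict (Set.Iic (-h))) := (integrableOn_exp_div h2δ (-h)).const_mul _
    have hb : ∀ s : ℝ, s ∈ Set.Iic (-h) →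
        ‖Real.exp (s / δ) * (ω (s + t) - ω t)‖ ≤ 3 * Kt * Real.exp (s / (2 * δ)) := by
      intro s hs
      have hs0 : s ≤ 0 := le_trans hs (by linarith)
      have hb1 : (1 + |s|) * Real.exp ((s - 0) / (2 * δ)) ≤ 1 + |(0:ℝ)| + 2 * δ :=
        one_add_abs_mul_exp_le h2δ hs0
      have hsplit2 : Real.exp (s / δ) = Real.exp (s / (2 * δ)) * Real.exp (s / (2 * δ)) := by
        rw [← Real.exp_add]
        congr 1
        field_simp
        ring
      have hexp : (0:ℝ) < Real.exp (s / (2 * δ)) := Real.exp_pos _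
      calc ‖Real.exp (s / δ) * (ω (s + t) - ω t)‖
          = Real.exp (s / δ) * |ω (s + t) - ω t| := by
            rw [Real.norm_eq_abs, abs_mul, abs_of_pos (Real.exp_pos _)]
        _ ≤ Real.exp (s / δ) * (Kt * (1 + |s|)) :=
            mul_le_mul_of_nonneg_left (hFbd s) (Real.exp_pos _).le
        _ = Kt * ((1 + |s|) * Real.exp ((s - 0) / (2 * δ))) * Real.exp (s / (2 * δ)) := by
            rw [hsplit2, sub_zero]
            ring
        _ ≤ Kt * (1 + |(0:ℝ)| + 2 * δ) * Real.exp (s / (2 * δ)) := by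
            apply mul_le_mul_of_nonneg_right _ hexp.le
            exact mul_le_mul_of_nonneg_left hb1 hKt0
        _ ≤ 3 * Kt * Real.exp (s / (2 * δ)) := by
            apply mul_le_mul_of_nonneg_right _ hexp.le
            rw [abs_zero]
            nlinarith
    have := MeasureTheory.norm_integral_le_of_norm_le hg
      ((ae_restrict_iff' measurableSet_Iic).2 (Filter.Eventually.of_forall hb))
    rw [Real.norm_eq_abs] at this
    calc |∫ s in Set.Iic (-h), Real.exp (s / δ) * (ω (s + t) - ω t)|
        ≤ ∫ s in Set.Iic (-h), 3 * Kt * Real.exp (s / (2 * δ)) := this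
      _ = 3 * Kt * (2 * δ * Real.exp (-h / (2 * δ))) := by
          rw [MeasureTheory.integral_const_mul, integral_exp_div h2δ (-h)]
  -- near bound
  have hnear : |∫ s in (-h)..(0:ℝ), Real.exp (s / δ) * (ω (s + t) - ω t)| ≤ ε * δ := by
    have hbd : ∀ᵐ s ∂volume.restrict (Set.uIoc (-h) (0:ℝ)),
        ‖Real.exp (s / δ) * (ω (s + t) - ω t)‖ ≤ ε * Real.exp (s / δ) := by
      rw [Set.uIoc_of_le (by linarith : -h ≤ (0:ℝ))]
      rw [ae_restrict_iff' measurableSet_Ioc]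
      apply Filter.Eventually.of_forall
      intro s hs
      have hmem : s ∈ Set.Icc (-h) (0:ℝ) := ⟨hs.1.le, hs.2⟩
      have := hmod t ht s hmem
      rw [Real.norm_eq_abs, abs_mul, abs_of_pos (Real.exp_pos _)]
      calc Real.exp (s / δ) * |ω (s + t) - ω t| ≤ Real.exp (s / δ) * ε :=
            mul_le_mul_of_nonneg_left this (Real.exp_pos _).le
        _ = ε * Real.exp (s / δ) := by ring
    have hgi : IntervalIntegrable (fun s => ε * Real.exp (s / δ)) volume (-h) 0 :=
      (continuous_const.mul (Real.continuous_exp.comp (continuous_id.div_const δ))).intervalIntegrable _ _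
    have hle := intervalIntegral.norm_integral_le_abs_of_norm_le hbd hgi
    rw [Real.norm_eq_abs] at hle
    have hval : (∫ s in (-h)..(0:ℝ), ε * Real.exp (s / δ))
        = ε * (δ * Real.exp (0 / δ)) - ε * (δ * Real.exp (-h / δ)) := by
      have h1 : (∫ s in Set.Iic (0:ℝ), ε * Real.exp (s / δ))
          - (∫ s in Set.Iic (-h), ε * Real.exp (s / δ))
          = ∫ s in (-h)..(0:ℝ), ε * Real.exp (s / δ) :=
        intervalIntegral.integral_Iic_sub_Iic ((integrableOn_exp_div hδ0 (-h)).const_mul ε)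
          ((integrableOn_exp_div hδ0 0).const_mul ε)
      rw [← h1, MeasureTheory.integral_const_mul, MeasureTheory.integral_const_mul,
        integral_exp_div hδ0 0, integral_exp_div hδ0 (-h)]
    have hexple : Real.exp (-h / δ) ≤ 1 :=
      Real.exp_le_one_iff.2 (by apply div_nonpos_of_nonpos_of_nonneg <;> linarith)
    have hexppos : (0:ℝ) < Real.exp (-h / δ) := Real.exp_pos _
    calc |∫ s in (-h)..(0:ℝ), Real.exp (s / δ) * (ω (s + t) - ω t)|
        ≤ |∫ s in (-h)..(0:ℝ), ε * Real.exp (s / δ)| := hle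
      _ = ε * (δ * Real.exp (0 / δ)) - ε * (δ * Real.exp (-h / δ)) := by
          rw [hval, abs_of_nonneg]
          have : Real.exp (-h / δ) ≤ Real.exp (0 / δ) := by
            rw [zero_div, Real.exp_zero]; exact hexple
          nlinarith [mul_nonneg hε hδ0.le]
      _ ≤ ε * δ := by
          rw [zero_div, Real.exp_zero]
          nlinarith [mul_nonneg hε hδ0.le, mul_nonneg (mul_nonneg hε hδ0.le) hexppos.le]
  -- combine
  have htotal : |∫ s in Set.Iic (0:ℝ), Real.exp (s / δ) * (ω (s + t) - ω t)|
      ≤ ε * δ + 6 * Kt * δ * Real.exp (-h / (2 * δ)) := by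
    rw [hsplit]
    calc |(∫ s in Set.Iic (-h), Real.exp (s / δ) * (ω (s + t) - ω t))
          + ∫ s in (-h)..(0:ℝ), Real.exp (s / δ) * (ω (s + t) - ω t)|
        ≤ |∫ s in Set.Iic (-h), Real.exp (s / δ) * (ω (s + t) - ω t)|
          + |∫ s in (-h)..(0:ℝ), Real.exp (s / δ) * (ω (s + t) - ω t)| := abs_add_le _ _
      _ ≤ 3 * Kt * (2 * δ * Real.exp (-h / (2 * δ))) + ε * δ := add_le_add htail hnear
      _ = ε * δ + 6 * Kt * δ * Real.exp (-h / (2 * δ)) := by ring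
  have hδinv : (0:ℝ) < δ⁻¹ := by positivity
  calc δ⁻¹ * |∫ s in Set.Iic (0:ℝ), Real.exp (s / δ) * (ω (s + t) - ω t)|
      ≤ δ⁻¹ * (ε * δ + 6 * Kt * δ * Real.exp (-h / (2 * δ))) :=
        mul_le_mul_of_nonneg_left htotal hδinv.le
    _ = ε + 6 * Kt * Real.exp (-h / (2 * δ)) := by
        field_simp
    _ = ε + 6 * (C * (2 * T + 2)) * Real.exp (-h / (2 * δ)) := by rw [hKt]

/-- For a continuous `ω : ℝ → ℝ` with `ω 0 = 0` and
`|ω s| ≤ C̄ (|s| + 1)`, the pathwise colored-noise process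
`ξ_δ(t) = -δ⁻² ∫_{-∞}^0 e^{s/δ} (θ_t ω)(s) ds` is well defined (the integral
converges absolutely) for every `t`, and for every `T > 0`,
`sup_{|t| ≤ T} |∫_0^t ξ_δ(r) dr - ω t| → 0` as `δ → 0⁺`. -/
theorem statement14 (ω : ℝ → ℝ) (hωc : Continuous ω) (hω0 : ω 0 = 0)
    (C : ℝ) (hC : 0 ≤ C) (hωbd : ∀ s : ℝ, |ω s| ≤ C * (|s| + 1)) :
    (∀ δ ∈ Set.Ioc (0 : ℝ) 1, ∀ t : ℝ,
      IntegrableOn (fun s => Real.exp (s / δ) * (ω (s + t) - ω t))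
        (Set.Iic 0) volume) ∧
    (∀ T > (0 : ℝ),
      Tendsto (fun δ : ℝ => ⨆ t ∈ Set.Icc (-T) T,
          |(∫ r in (0:ℝ)..t,
              -δ⁻¹ ^ 2 * ∫ s in Set.Iic (0 : ℝ), Real.exp (s / δ) * (ω (s + r) - ω r))
            - ω t|)
        (𝓝[>] 0) (𝓝 0)) := by
  constructor
  · intro δ hδ t
    have hbd : ∀ s : ℝ, |ω (s + t) - ω t| ≤ (C * (2 * |t| + 2)) * (1 + |s|) := by
      intro s
      have h1 := hωbd (s + t)
      have h2 := hωbd t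
      have h3 : |ω (s + t) - ω t| ≤ |ω (s + t)| + |ω t| := abs_sub _ _
      have h4 : |s + t| ≤ |s| + |t| := abs_add_le _ _
      nlinarith [abs_nonneg s, abs_nonneg t, mul_nonneg hC (abs_nonneg s),
        mul_nonneg (mul_nonneg hC (abs_nonneg t)) (abs_nonneg s)]
    exact integrableOn_exp_div_mul 0 hδ.1 (by positivity)
      ((hωc.comp (continuous_id.add continuous_const)).sub continuous_const) hbd
  · intro T hT
    rw [NormedAddCommGroup.tendsto_nhds_zero]
    intro ε hε
    have hu := (isCompact_Icc (a := -T - 1) (b := T + 1)).uniformContinuousOn_of_continuous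
      hωc.continuousOn
    rw [Metric.uniformContinuousOn_iff] at hu
    obtain ⟨d, hd0, hdmod⟩ := hu (ε / 8) (by positivity)
    set h : ℝ := min (d / 2) 1 with hh
    have hh0 : 0 < h := lt_min (by positivity) one_pos
    have hh1 : h ≤ 1 := min_le_right _ _
    have hmod : ∀ t ∈ Set.Icc (-T) T, ∀ s ∈ Set.Icc (-h) (0:ℝ),
        |ω (s + t) - ω t| ≤ ε / 8 := by
      intro t ht s hs
      have h1 : s + t ∈ Set.Icc (-T - 1) (T + 1) := by
        constructor
        · linarith [ht.1, hs.1, hh1]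
        · linarith [ht.2, hs.2]
      have h2 : t ∈ Set.Icc (-T - 1) (T + 1) := by
        constructor
        · linarith [ht.1]
        · linarith [ht.2]
      have h3 : dist (s + t) t < d := by
        rw [Real.dist_eq]
        have : |s + t - t| = |s| := by ring_nf
        rw [this]
        have h5 : |s| ≤ h := abs_le.2 ⟨hs.1, le_trans hs.2 hh0.le⟩
        have h6 : h ≤ d / 2 := min_le_left _ _
        linarith
      have := hdmod _ h1 _ h2 h3
      rw [Real.dist_eq] at this
      linarith
    have htail : Tendsto (fun δ : ℝ => 6 * (C * (2 * T + 2)) * Real.exp (-h / (2 * δ)))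
        (𝓝[>] 0) (𝓝 0) := by
      have h1 : Tendsto (fun δ : ℝ => -h / (2 * δ)) (𝓝[>] (0:ℝ)) atBot := by
        have h2 : Tendsto (fun δ : ℝ => δ⁻¹) (𝓝[>] (0:ℝ)) atTop := tendsto_inv_nhdsGT_zero
        have h3 := h2.const_mul_atTop (show (0:ℝ) < h / 2 by positivity)
        have h4 := tendsto_neg_atTop_atBot.comp h3
        have h5 : (fun δ : ℝ => -h / (2 * δ)) = (fun x : ℝ => -x) ∘ (fun δ => h / 2 * δ⁻¹) := by
          funext x
          simp only [Function.comp_apply]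
          rw [div_eq_mul_inv, div_eq_mul_inv, mul_inv]
          ring
        rw [h5]
        exact h4
      have h6 := (Real.tendsto_exp_atBot.comp h1).const_mul (6 * (C * (2 * T + 2)))
      simpa using h6
    have hev1 : ∀ᶠ δ in 𝓝[>] (0:ℝ),
        6 * (C * (2 * T + 2)) * Real.exp (-h / (2 * δ)) < ε / 8 :=
      htail.eventually_lt_const (by positivity)
    have hev2 : ∀ᶠ δ in 𝓝[>] (0:ℝ), δ ∈ Set.Ioc (0:ℝ) 1 :=
      Ioc_mem_nhdsGT_of_mem ⟨le_refl 0, zero_lt_one⟩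
    filter_upwards [hev1, hev2] with δ hδtail hδmem
    obtain ⟨hδ0, hδ1⟩ := hδmem
    have hptbd : ∀ t ∈ Set.Icc (-T) T,
        |(∫ r in (0:ℝ)..t,
            -δ⁻¹ ^ 2 * ∫ s in Set.Iic (0:ℝ), Real.exp (s / δ) * (ω (s + r) - ω r)) - ω t|
          ≤ ε / 2 := by
      intro t ht
      rw [S14_main_eq ω hωc hω0 C hC hωbd hδ0 t]
      have h0mem : (0:ℝ) ∈ Set.Icc (-T) T := ⟨by linarith, by linarith⟩
      have b1 := S14_J_bound ω hωc C hC hωbd hδ0 hδ1 hT hh0 hh1 (by positivity) hmod ht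
      have b2 := S14_J_bound ω hωc C hC hωbd hδ0 hδ1 hT hh0 hh1 (by positivity) hmod h0mem
      have hδinv : (0:ℝ) ≤ δ⁻¹ := by positivity
      have habs : |δ⁻¹ * (∫ s in Set.Iic (0:ℝ), Real.exp (s / δ) * (ω (s + t) - ω t))
            - δ⁻¹ * (∫ s in Set.Iic (0:ℝ), Real.exp (s / δ) * (ω (s + 0) - ω 0))|
          ≤ δ⁻¹ * |∫ s in Set.Iic (0:ℝ), Real.exp (s / δ) * (ω (s + t) - ω t)|
            + δ⁻¹ * |∫ s in Set.Iic (0:ℝ), Real.exp (s / δ) * (ω (s + 0) - ω 0)| := by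
        calc |δ⁻¹ * (∫ s in Set.Iic (0:ℝ), Real.exp (s / δ) * (ω (s + t) - ω t))
              - δ⁻¹ * (∫ s in Set.Iic (0:ℝ), Real.exp (s / δ) * (ω (s + 0) - ω 0))|
            ≤ |δ⁻¹ * (∫ s in Set.Iic (0:ℝ), Real.exp (s / δ) * (ω (s + t) - ω t))|
              + |δ⁻¹ * (∫ s in Set.Iic (0:ℝ), Real.exp (s / δ) * (ω (s + 0) - ω 0))| :=
              abs_sub _ _
          _ = δ⁻¹ * |∫ s in Set.Iic (0:ℝ), Real.exp (s / δ) * (ω (s + t) - ω t)|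
              + δ⁻¹ * |∫ s in Set.Iic (0:ℝ), Real.exp (s / δ) * (ω (s + 0) - ω 0)| := by
              rw [abs_mul, abs_mul, abs_of_nonneg hδinv]
      linarith
    have hsup_nonneg : (0:ℝ) ≤ ⨆ t ∈ Set.Icc (-T) T,
        |(∫ r in (0:ℝ)..t,
            -δ⁻¹ ^ 2 * ∫ s in Set.Iic (0:ℝ), Real.exp (s / δ) * (ω (s + r) - ω r)) - ω t| :=
      Real.iSup_nonneg fun t => Real.iSup_nonneg fun _ => abs_nonneg _
    have hsup_le : (⨆ t ∈ Set.Icc (-T) T,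
        |(∫ r in (0:ℝ)..t,
            -δ⁻¹ ^ 2 * ∫ s in Set.Iic (0:ℝ), Real.exp (s / δ) * (ω (s + r) - ω r)) - ω t|)
          ≤ ε / 2 :=
      Real.iSup_le (fun t => Real.iSup_le (fun ht => hptbd t ht) (by positivity))
        (by positivity)
    rw [Real.norm_eq_abs, abs_of_nonneg hsup_nonneg]
    linarith
end

section
/- Assume the standing assumptions on a noise family (ω, (ζ_δ)_{δ∈(0,1]}). For δ ∈ (0,1] define x_δ(t) := ∫_{−∞}^0 e^{r} ζ_δ(r + t) dr and define x_0(t) := ω(t) − ∫_{−∞}^0 e^{r} ω(r + t) dr. Then all integrals converge absolutely, and for every T > 0, lim_{δ→0⁺} sup_{|t| ≤ T} | x_δ(t) − x_0(t) | = 0. -/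
open Filter Topology MeasureTheory

private lemma exphalf_int : IntegrableOn (fun r : ℝ => Real.exp (r / 2)) (Set.Iic 0) := by
  have hc : Continuous fun r : ℝ => Real.exp (r / 2) :=
    Real.continuous_exp.comp (continuous_id.div_const 2)
  refine integrableOn_Iic_of_intervalIntegral_norm_bounded 2 0
    (fun y => hc.integrableOn_Ioc) tendsto_id ?_
  filter_upwards with y
  simp only [id_eq]
  have h1 : (∫ x in y..(0:ℝ), ‖Real.exp (x / 2)‖) = ∫ x in y..(0:ℝ), Real.exp (x / 2) := by
    simp [Real.norm_eq_abs, abs_of_pos (Real.exp_pos _)]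
  rw [h1, intervalIntegral.integral_comp_div (f := Real.exp) two_ne_zero, integral_exp]
  simp only [smul_eq_mul, zero_div]
  nlinarith [Real.exp_pos (y / 2), Real.exp_zero]

private lemma integral_exphalf : ∫ r in Set.Iic (0:ℝ), Real.exp (r / 2) = 2 := by
  have hderiv : ∀ r ∈ Set.Iic (0:ℝ),
      HasDerivAt (fun r : ℝ => 2 * Real.exp (r / 2)) (Real.exp (r / 2)) r := by
    intro r _
    have h0 := (((hasDerivAt_id r).div_const 2).exp).const_mul (2:ℝ)
    simp only [id_eq] at h0
    have e : Real.exp (r / 2) = 2 * (Real.exp (r / 2) * (1 / 2)) := by ring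
    rw [e]; exact h0
  have htend : Tendsto (fun r : ℝ => 2 * Real.exp (r / 2)) atBot (𝓝 0) := by
    have h1 : Tendsto (fun r : ℝ => r / 2) atBot atBot := tendsto_id.atBot_div_const two_pos
    have := (Real.tendsto_exp_atBot.comp h1).const_mul (2:ℝ)
    simpa using this
  have := MeasureTheory.integral_Iic_of_hasDerivAt_of_tendsto' hderiv exphalf_int htend
  simpa using this

private lemma neg_mul_exp_le_s17 (r : ℝ) (hr : r ≤ 0) : (-r) * Real.exp r ≤ Real.exp (r / 2) := by
  have h1 : (1 : ℝ) - r / 4 ≤ Real.exp (-(r / 4)) := by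
    have := Real.add_one_le_exp (-(r / 4)); linarith
  have h6 : (0 : ℝ) ≤ 1 - r / 4 := by linarith
  have h3 : Real.exp (-(r / 2)) = Real.exp (-(r / 4)) * Real.exp (-(r / 4)) := by
    rw [← Real.exp_add]; ring_nf
  have h4 : (1 - r / 4) * (1 - r / 4) ≤ Real.exp (-(r / 4)) * Real.exp (-(r / 4)) :=
    mul_le_mul h1 h1 h6 (Real.exp_pos _).le
  have h2 : -r ≤ Real.exp (-(r / 2)) := by
    rw [h3]; nlinarith [sq_nonneg (1 + r / 4)]
  calc (-r) * Real.exp r ≤ Real.exp (-(r / 2)) * Real.exp r :=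
        mul_le_mul_of_nonneg_right h2 (Real.exp_pos r).le
    _ = Real.exp (r / 2) := by rw [← Real.exp_add]; ring_nf

private lemma key_bound {A t r : ℝ} (hA : 0 ≤ A) (hr : r ≤ 0) {y : ℝ}
    (hy : |y| ≤ A * ((r + t) ^ 2 + |r + t| + 1)) :
    Real.exp r * |y| ≤ A * (2 * t ^ 2 + |t| + 33) * Real.exp (r / 2) := by
  have habs : |r + t| ≤ -r + |t| := by
    calc |r + t| ≤ |r| + |t| := abs_add_le r t
      _ = -r + |t| := by rw [abs_of_nonpos hr]
  have h2 : (r + t) ^ 2 + |r + t| + 1 ≤ 2 * r ^ 2 + 2 * t ^ 2 + -r + |t| + 1 := by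
    nlinarith [sq_nonneg (r - t), habs]
  have h3 : 2 * r ^ 2 + 2 * t ^ 2 + -r + |t| + 1 ≤ (2 * t ^ 2 + |t| + 33) * (1 - r / 4) ^ 2 := by
    nlinarith [abs_nonneg t, sq_nonneg r, sq_nonneg t, mul_nonneg (neg_nonneg.2 hr) (abs_nonneg t),
      mul_nonneg (neg_nonneg.2 hr) (sq_nonneg t), mul_nonneg (sq_nonneg r) (abs_nonneg t),
      mul_nonneg (sq_nonneg r) (sq_nonneg t), hr]
  have h5 : (1 : ℝ) - r / 4 ≤ Real.exp (-(r / 4)) := by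
    have := Real.add_one_le_exp (-(r / 4)); linarith
  have h6 : (0 : ℝ) ≤ 1 - r / 4 := by linarith
  have h4 : (1 - r / 4) ^ 2 ≤ Real.exp (-(r / 2)) := by
    have hq : Real.exp (-(r / 2)) = Real.exp (-(r / 4)) * Real.exp (-(r / 4)) := by
      rw [← Real.exp_add]; ring_nf
    rw [hq]; nlinarith [mul_le_mul h5 h5 h6 (Real.exp_pos (-(r / 4))).le]
  have hc0 : (0:ℝ) ≤ 2 * t ^ 2 + |t| + 33 := by positivity
  have hchain : |y| ≤ A * (2 * t ^ 2 + |t| + 33) * Real.exp (-(r / 2)) := by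
    calc |y| ≤ A * ((r + t) ^ 2 + |r + t| + 1) := hy
      _ ≤ A * ((2 * t ^ 2 + |t| + 33) * Real.exp (-(r / 2))) := by
          refine mul_le_mul_of_nonneg_left ?_ hA
          calc (r + t) ^ 2 + |r + t| + 1 ≤ (2 * t ^ 2 + |t| + 33) * (1 - r / 4) ^ 2 := by linarith
            _ ≤ (2 * t ^ 2 + |t| + 33) * Real.exp (-(r / 2)) :=
                mul_le_mul_of_nonneg_left h4 hc0
      _ = A * (2 * t ^ 2 + |t| + 33) * Real.exp (-(r / 2)) := by ring
  calc Real.exp r * |y| ≤ Real.exp r * (A * (2 * t ^ 2 + |t| + 33) * Real.exp (-(r / 2))) :=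
        mul_le_mul_of_nonneg_left hchain (Real.exp_pos r).le
    _ = A * (2 * t ^ 2 + |t| + 33) * (Real.exp r * Real.exp (-(r / 2))) := by ring
    _ = A * (2 * t ^ 2 + |t| + 33) * Real.exp (r / 2) := by rw [← Real.exp_add]; ring_nf

private lemma integrable_growth {f : ℝ → ℝ} (hf : Continuous f) {A : ℝ} (t : ℝ)
    (hbd : ∀ s, |f s| ≤ A * (s ^ 2 + |s| + 1)) :
    IntegrableOn (fun r => Real.exp r * f (r + t)) (Set.Iic 0) := by
  have hA : 0 ≤ A := by
    have h := hbd 0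
    simp only [abs_zero] at h
    nlinarith [abs_nonneg (f 0)]
  refine ((exphalf_int.const_mul (A * (2 * t ^ 2 + |t| + 33)))).mono' ?_ ?_
  · exact (Real.continuous_exp.mul
      (hf.comp (continuous_id.add continuous_const))).aestronglyMeasurable
  · filter_upwards [ae_restrict_mem measurableSet_Iic] with r hr
    have h : ‖Real.exp r * f (r + t)‖ = Real.exp r * |f (r + t)| := by
      rw [Real.norm_eq_abs, abs_mul, abs_of_pos (Real.exp_pos r)]
    rw [h]
    exact key_bound hA hr (hbd (r + t))

private lemma tendsto_aux {f : ℝ → ℝ} {A : ℝ} (hA : 0 ≤ A) (t : ℝ)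
    (hbd : ∀ s, |f s| ≤ A * (s ^ 2 + |s| + 1)) :
    Tendsto (fun r => Real.exp r * f (r + t)) atBot (𝓝 0) := by
  apply squeeze_zero_norm' (a := fun r => A * (2 * t ^ 2 + |t| + 33) * Real.exp (r / 2))
  · filter_upwards [eventually_le_atBot (0:ℝ)] with r hr
    have h : ‖Real.exp r * f (r + t)‖ = Real.exp r * |f (r + t)| := by
      rw [Real.norm_eq_abs, abs_mul, abs_of_pos (Real.exp_pos r)]
    rw [h]
    exact key_bound hA hr (hbd (r + t))
  · have h1 : Tendsto (fun r : ℝ => r / 2) atBot atBot := tendsto_id.atBot_div_const two_pos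
    have := (Real.tendsto_exp_atBot.comp h1).const_mul (A * (2 * t ^ 2 + |t| + 33))
    simpa using this

private lemma primitive_hasDerivAt {g : ℝ → ℝ} (hg : Continuous g) (s : ℝ) :
    HasDerivAt (fun u => ∫ x in (0:ℝ)..u, g x) (g s) s :=
  intervalIntegral.integral_hasDerivAt_right (hg.intervalIntegrable 0 s)
    (hg.stronglyMeasurableAtFilter _ _) hg.continuousAt

private lemma primitive_bound {g : ℝ → ℝ} {K : ℝ} (hK : 0 ≤ K)
    (hbd : ∀ s, |g s| ≤ K * (|s| + 1)) (s : ℝ) :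
    |∫ x in (0:ℝ)..s, g x| ≤ K * (s ^ 2 + |s| + 1) := by
  have h : ∀ x ∈ Set.uIoc (0:ℝ) s, ‖g x‖ ≤ K * (|s| + 1) := by
    intro x hx
    have hx1 : min 0 s < x := hx.1
    have hx2 : x ≤ max 0 s := hx.2
    have hx' : |x| ≤ |s| := by
      rw [abs_le]
      constructor
      · have : -|s| ≤ min 0 s := le_min (by simp [abs_nonneg]) (neg_abs_le s)
        linarith
      · have : max 0 s ≤ |s| := max_le (abs_nonneg s) (le_abs_self s)
        linarith
    rw [Real.norm_eq_abs]
    calc |g x| ≤ K * (|x| + 1) := hbd x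
      _ ≤ K * (|s| + 1) := by apply mul_le_mul_of_nonneg_left _ hK; linarith
  have h2 := intervalIntegral.norm_integral_le_of_norm_le_const h
  rw [Real.norm_eq_abs, sub_zero] at h2
  have h3 : |s| * |s| = s ^ 2 := by rw [← abs_mul, abs_mul_self, sq]
  nlinarith [abs_nonneg s, hK]
private lemma le_biSup' {H : ℝ → ℝ} (hH : Continuous H) {a b s : ℝ} (hs : s ∈ Set.Icc a b) :
    |H s| ≤ ⨆ t ∈ Set.Icc a b, |H t| := by
  obtain ⟨B, hB⟩ := (isCompact_Icc (a := a) (b := b)).exists_bound_of_continuousOn hH.continuousOn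
  have hbdd : BddAbove (Set.range fun t => ⨆ _ : t ∈ Set.Icc a b, |H t|) := by
    refine ⟨max B 0, ?_⟩
    rintro x ⟨t, rfl⟩
    refine Real.iSup_le (fun ht => ?_) (le_max_right _ _)
    exact le_trans (le_of_eq (Real.norm_eq_abs (H t)).symm)
      ((hB t ht).trans (le_max_left _ _))
  calc |H s| = ⨆ _ : s ∈ Set.Icc a b, |H s| := (ciSup_pos (f := fun _ => |H s|) hs).symm
    _ ≤ ⨆ t ∈ Set.Icc a b, |H t| := le_ciSup hbdd s

private lemma ibp {g : ℝ → ℝ} (hg : Continuous g) {K : ℝ} (hK : 0 ≤ K)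
    (hbd : ∀ s, |g s| ≤ K * (|s| + 1)) (t : ℝ) :
    ∫ r in Set.Iic (0:ℝ), Real.exp r * g (r + t) =
      (∫ u in (0:ℝ)..t, g u) - ∫ r in Set.Iic (0:ℝ), Real.exp r * ∫ u in (0:ℝ)..(r + t), g u := by
  have hbd' : ∀ s, |g s| ≤ K * (s ^ 2 + |s| + 1) := fun s =>
    le_trans (hbd s) (by nlinarith [sq_nonneg s, hK, abs_nonneg s])
  have hGbd : ∀ s, |∫ u in (0:ℝ)..s, g u| ≤ K * (s ^ 2 + |s| + 1) := primitive_bound hK hbd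
  have hGc : Continuous fun s => ∫ u in (0:ℝ)..s, g u :=
    intervalIntegral.continuous_primitive (fun a b => hg.intervalIntegrable a b) 0
  have hint1 : IntegrableOn (fun r => Real.exp r * g (r + t)) (Set.Iic 0) :=
    integrable_growth hg t hbd'
  have hint2 : IntegrableOn (fun r => Real.exp r * ∫ u in (0:ℝ)..(r + t), g u) (Set.Iic 0) :=
    integrable_growth hGc t hGbd
  have hderiv : ∀ r ∈ Set.Iic (0:ℝ),
      HasDerivAt (fun r => Real.exp r * ∫ u in (0:ℝ)..(r + t), g u)
        ((fun r => Real.exp r * (∫ u in (0:ℝ)..(r + t), g u) + Real.exp r * g (r + t)) r) r := by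
    intro r _
    have h1 : HasDerivAt (fun r => ∫ u in (0:ℝ)..(r + t), g u) (g (r + t)) r :=
      HasDerivAt.comp_add_const r t (primitive_hasDerivAt hg (r + t))
    exact (Real.hasDerivAt_exp r).mul h1
  have htend : Tendsto (fun r => Real.exp r * ∫ u in (0:ℝ)..(r + t), g u) atBot (𝓝 0) :=
    tendsto_aux hK t hGbd
  have hkey := MeasureTheory.integral_Iic_of_hasDerivAt_of_tendsto' hderiv
    (hint2.add hint1) htend
  rw [MeasureTheory.integral_add hint2 hint1] at hkey
  simp only [Real.exp_zero, zero_add, one_mul, sub_zero] at hkey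
  linarith [hkey]

/-- For a noise family `(ω, (ζ_δ))` satisfying the standing
assumptions, set `x_δ(t) = ∫_{-∞}^0 e^{r} ζ_δ(r+t) dr` and
`x_0(t) = ω(t) - ∫_{-∞}^0 e^{r} ω(r+t) dr`.  Then all integrals converge
absolutely, and for every `T > 0`, `sup_{|t| ≤ T} |x_δ(t) - x_0(t)| → 0`
as `δ → 0⁺`. -/
theorem statement17 (ω : ℝ → ℝ) (hωc : Continuous ω) (hω0 : ω 0 = 0)
    (ζ : ℝ → ℝ → ℝ) (hζc : ∀ δ ∈ Set.Ioc (0 : ℝ) 1, Continuous (ζ δ))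
    -- (i) sublinear growth of ω
    (C : ℝ) (hC : 0 ≤ C) (hωbd : ∀ t : ℝ, |ω t| ≤ C * (|t| + 1))
    -- (ii) sublinear growth of each ζ_δ
    (hζbd : ∀ δ ∈ Set.Ioc (0 : ℝ) 1, ∃ K > 0, ∀ t : ℝ, |ζ δ t| ≤ K * (|t| + 1))
    -- (iii) F_δ → 0 uniformly on compacts, where F_δ(t) = ∫_0^t ζ_δ - ω(t)
    (hFunif : ∀ T > (0 : ℝ),
      Tendsto (fun δ => ⨆ t ∈ Set.Icc (-T) T, |(∫ r in (0:ℝ)..t, ζ δ r) - ω t|)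
        (𝓝[>] 0) (𝓝 0))
    -- (iv) F_δ(t)/t → 0 as t → ±∞, uniformly for δ ∈ (0, δ̃]
    (hFtail : ∃ δt ∈ Set.Ioc (0 : ℝ) 1, ∀ θ > (0 : ℝ), ∃ M > (0 : ℝ),
      ∀ δ ∈ Set.Ioc (0 : ℝ) δt, ∀ t : ℝ, M ≤ |t| →
        |(∫ r in (0:ℝ)..t, ζ δ r) - ω t| ≤ θ * |t|) :
    (∀ δ ∈ Set.Ioc (0 : ℝ) 1, ∀ t : ℝ,
      IntegrableOn (fun r => Real.exp r * ζ δ (r + t)) (Set.Iic 0) volume) ∧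
    (∀ t : ℝ,
      IntegrableOn (fun r => Real.exp r * ω (r + t)) (Set.Iic 0) volume) ∧
    (∀ T > (0 : ℝ),
      Tendsto (fun δ => ⨆ t ∈ Set.Icc (-T) T,
          |(∫ r in Set.Iic (0 : ℝ), Real.exp r * ζ δ (r + t)) -
            (ω t - ∫ r in Set.Iic (0 : ℝ), Real.exp r * ω (r + t))|)
        (𝓝[>] 0) (𝓝 0)) := by
  obtain ⟨δt, hδt, htail⟩ := hFtail
  have part2 : ∀ t : ℝ, IntegrableOn (fun r => Real.exp r * ω (r + t)) (Set.Iic 0) volume :=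
    fun t => integrable_growth hωc t
      (fun s => le_trans (hωbd s) (by nlinarith [sq_nonneg s, abs_nonneg s, hC]))
  refine ⟨?_, part2, ?_⟩
  · intro δ hδ t
    obtain ⟨K, hK, hKbd⟩ := hζbd δ hδ
    exact integrable_growth (hζc δ hδ) t
      (fun s => le_trans (hKbd s) (by nlinarith [sq_nonneg s, abs_nonneg s, hK.le]))
  intro T hT
  rw [Metric.tendsto_nhds]
  intro ε hε
  have h1T : (0:ℝ) < 1 + T := by linarith
  set θ := ε / (8 * (1 + T)) with hθdef
  have hθ : 0 < θ := by positivity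
  obtain ⟨M, hM, hMtail⟩ := htail θ hθ
  set T' := M + 2 * T with hT'def
  have hT' : 0 < T' := by rw [hT'def]; linarith
  have hS := (Metric.tendsto_nhds.1 (hFunif T' hT')) (ε / 6) (by positivity)
  have hmem : Set.Ioc (0:ℝ) δt ∈ 𝓝[>] (0:ℝ) :=
    Ioc_mem_nhdsGT_of_mem ⟨le_refl 0, hδt.1⟩
  filter_upwards [hS, hmem] with δ hSδ hδmem
  have hδ1 : δ ∈ Set.Ioc (0:ℝ) 1 := ⟨hδmem.1, le_trans hδmem.2 hδt.2⟩
  obtain ⟨K, hK, hKbd⟩ := hζbd δ hδ1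
  have hζδc := hζc δ hδ1
  have hFc : Continuous fun s => (∫ r in (0:ℝ)..s, ζ δ r) - ω s :=
    (intervalIntegral.continuous_primitive (fun a b => hζδc.intervalIntegrable a b) 0).sub hωc
  have hS0 : 0 ≤ ⨆ t ∈ Set.Icc (-T') T', |(∫ r in (0:ℝ)..t, ζ δ r) - ω t| :=
    Real.iSup_nonneg fun t => Real.iSup_nonneg fun _ => abs_nonneg _
  have hSlt : (⨆ t ∈ Set.Icc (-T') T', |(∫ r in (0:ℝ)..t, ζ δ r) - ω t|) < ε / 6 := by
    rw [Real.dist_eq, sub_zero] at hSδ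
    exact lt_of_abs_lt hSδ
  have hSle : ∀ s ∈ Set.Icc (-T') T', |(∫ r in (0:ℝ)..s, ζ δ r) - ω s| ≤
      ⨆ t ∈ Set.Icc (-T') T', |(∫ r in (0:ℝ)..t, ζ δ r) - ω t| :=
    fun s hs => le_biSup' hFc hs
  set S : ℝ := ⨆ t ∈ Set.Icc (-T') T', |(∫ r in (0:ℝ)..t, ζ δ r) - ω t| with hSdef
  have hFbd : ∀ s, |(∫ r in (0:ℝ)..s, ζ δ r) - ω s| ≤ (K + C) * (s ^ 2 + |s| + 1) := by
    intro s
    have h1 := primitive_bound hK.le hKbd s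
    have h2 := hωbd s
    have h3 : |(∫ r in (0:ℝ)..s, ζ δ r) - ω s| ≤ |∫ r in (0:ℝ)..s, ζ δ r| + |ω s| := by
      rw [sub_eq_add_neg]
      exact (abs_add_le _ _).trans (by rw [abs_neg])
    nlinarith [sq_nonneg s, abs_nonneg s, hC, hK.le]
  -- the key per-t estimate
  have key : ∀ t ∈ Set.Icc (-T) T,
      |(∫ r in Set.Iic (0:ℝ), Real.exp r * ζ δ (r + t)) -
        (ω t - ∫ r in Set.Iic (0:ℝ), Real.exp r * ω (r + t))| ≤
        3 * S + 2 * θ * (1 + T) := by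
    intro t ht
    have hibp := ibp hζδc hK.le hKbd t
    have hintG : IntegrableOn (fun r => Real.exp r * ∫ u in (0:ℝ)..(r + t), ζ δ u)
        (Set.Iic 0) :=
      integrable_growth
        (intervalIntegral.continuous_primitive (fun a b => hζδc.intervalIntegrable a b) 0) t
        (primitive_bound hK.le hKbd)
    have hintω := part2 t
    have hsub : (∫ r in Set.Iic (0:ℝ), Real.exp r * ∫ u in (0:ℝ)..(r + t), ζ δ u) -
        ∫ r in Set.Iic (0:ℝ), Real.exp r * ω (r + t)
        = ∫ r in Set.Iic (0:ℝ), Real.exp r * ((∫ u in (0:ℝ)..(r + t), ζ δ u) - ω (r + t)) := by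
      rw [← MeasureTheory.integral_sub hintG hintω]
      congr 1
      ext r
      ring
    have hdiff : (∫ r in Set.Iic (0:ℝ), Real.exp r * ζ δ (r + t)) -
        (ω t - ∫ r in Set.Iic (0:ℝ), Real.exp r * ω (r + t))
        = ((∫ u in (0:ℝ)..t, ζ δ u) - ω t) -
          ∫ r in Set.Iic (0:ℝ), Real.exp r * ((∫ u in (0:ℝ)..(r + t), ζ δ u) - ω (r + t)) := by
      rw [hibp, ← hsub]
      ring
    rw [hdiff]
    have hptwise : ∀ r ∈ Set.Iic (0:ℝ),
        Real.exp r * |(∫ u in (0:ℝ)..(r + t), ζ δ u) - ω (r + t)| ≤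
          (S + θ * (1 + T)) * Real.exp (r / 2) := by
      intro r hr
      have hr' : r ≤ 0 := hr
      have hFval : |(∫ u in (0:ℝ)..(r + t), ζ δ u) - ω (r + t)| ≤ S + θ * (-r) + θ * T := by
        by_cases hcase : -(M + T) ≤ r
        · have hmem2 : r + t ∈ Set.Icc (-T') T' := by
            constructor
            · rw [hT'def]; linarith [ht.1]
            · rw [hT'def]; linarith [ht.2, hM]
          have h9 := hSle (r + t) hmem2
          have hθr : 0 ≤ θ * (-r) + θ * T := by
            have : 0 ≤ -r := by linarith
            have := mul_nonneg hθ.le this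
            nlinarith [mul_nonneg hθ.le hT.le]
          linarith
        · push_neg at hcase
          have habs : M ≤ |r + t| := by
            have h7 : -(r + t) ≤ |r + t| := neg_le_abs _
            linarith [ht.2]
          have h10 := hMtail δ hδmem (r + t) habs
          have h8 : |r + t| ≤ -r + T := by
            have h11 := abs_add_le r t
            rw [abs_of_nonpos hr'] at h11
            have h9 : |t| ≤ T := abs_le.2 ⟨ht.1, ht.2⟩
            linarith
          nlinarith [hθ.le, hS0]
      have e1 : Real.exp r ≤ Real.exp (r / 2) := Real.exp_le_exp.2 (by linarith)
      have e2 : (-r) * Real.exp r ≤ Real.exp (r / 2) := neg_mul_exp_le_s17 r hr'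
      have e3 : Real.exp r * |(∫ u in (0:ℝ)..(r + t), ζ δ u) - ω (r + t)| ≤
          Real.exp r * (S + θ * (-r) + θ * T) :=
        mul_le_mul_of_nonneg_left hFval (Real.exp_pos r).le
      have e4 : S * Real.exp r ≤ S * Real.exp (r / 2) := mul_le_mul_of_nonneg_left e1 hS0
      have e5 : θ * ((-r) * Real.exp r) ≤ θ * Real.exp (r / 2) :=
        mul_le_mul_of_nonneg_left e2 hθ.le
      have e6 : (θ * T) * Real.exp r ≤ (θ * T) * Real.exp (r / 2) :=
        mul_le_mul_of_nonneg_left e1 (mul_nonneg hθ.le hT.le)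
      nlinarith [e3, e4, e5, e6]
    have hintFabs : IntegrableOn
        (fun r => Real.exp r * |(∫ u in (0:ℝ)..(r + t), ζ δ u) - ω (r + t)|) (Set.Iic 0) := by
      have := integrable_growth (f := fun s => |(∫ u in (0:ℝ)..s, ζ δ u) - ω s|)
        (continuous_abs.comp hFc) t (fun s => by rw [abs_abs]; exact hFbd s)
      exact this
    have hmon : (∫ r in Set.Iic (0:ℝ),
          Real.exp r * |(∫ u in (0:ℝ)..(r + t), ζ δ u) - ω (r + t)|)
        ≤ ∫ r in Set.Iic (0:ℝ), (S + θ * (1 + T)) * Real.exp (r / 2) :=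
      MeasureTheory.setIntegral_mono_on hintFabs (exphalf_int.const_mul _)
        measurableSet_Iic hptwise
    have hval : (∫ r in Set.Iic (0:ℝ), (S + θ * (1 + T)) * Real.exp (r / 2))
        = (S + θ * (1 + T)) * 2 := by
      rw [MeasureTheory.integral_const_mul, integral_exphalf]
    have habsint : |∫ r in Set.Iic (0:ℝ),
          Real.exp r * ((∫ u in (0:ℝ)..(r + t), ζ δ u) - ω (r + t))|
        ≤ ∫ r in Set.Iic (0:ℝ),
          Real.exp r * |(∫ u in (0:ℝ)..(r + t), ζ δ u) - ω (r + t)| := by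
      have h := MeasureTheory.norm_integral_le_integral_norm
        (μ := volume.restrict (Set.Iic 0))
        (fun r => Real.exp r * ((∫ u in (0:ℝ)..(r + t), ζ δ u) - ω (r + t)))
      rw [Real.norm_eq_abs] at h
      refine h.trans (le_of_eq ?_)
      refine MeasureTheory.integral_congr_ae (Filter.Eventually.of_forall fun r => ?_)
      simp only [Real.norm_eq_abs, abs_mul, abs_of_pos (Real.exp_pos r)]
    have hFt : |(∫ u in (0:ℝ)..t, ζ δ u) - ω t| ≤ S := by
      refine hSle t ⟨?_, ?_⟩
      · rw [hT'def]; linarith [ht.1]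
      · rw [hT'def]; linarith [ht.2]
    have htri : |((∫ u in (0:ℝ)..t, ζ δ u) - ω t) -
        ∫ r in Set.Iic (0:ℝ), Real.exp r * ((∫ u in (0:ℝ)..(r + t), ζ δ u) - ω (r + t))|
        ≤ |(∫ u in (0:ℝ)..t, ζ δ u) - ω t| +
          |∫ r in Set.Iic (0:ℝ), Real.exp r * ((∫ u in (0:ℝ)..(r + t), ζ δ u) - ω (r + t))| := by
      rw [sub_eq_add_neg]
      exact (abs_add_le _ _).trans (by rw [abs_neg])
    linarith [htri, hFt, habsint, hmon, hval]
  -- conclude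
  rw [Real.dist_eq, sub_zero]
  have hRHS0 : 0 ≤ 3 * S + 2 * θ * (1 + T) := by nlinarith [hS0, hθ.le, h1T]
  have hsupb : (⨆ t ∈ Set.Icc (-T) T,
      |(∫ r in Set.Iic (0:ℝ), Real.exp r * ζ δ (r + t)) -
        (ω t - ∫ r in Set.Iic (0:ℝ), Real.exp r * ω (r + t))|) ≤ 3 * S + 2 * θ * (1 + T) :=
    Real.iSup_le (fun t => Real.iSup_le (fun ht => key t ht) hRHS0) hRHS0
  have hsup0 : 0 ≤ ⨆ t ∈ Set.Icc (-T) T,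
      |(∫ r in Set.Iic (0:ℝ), Real.exp r * ζ δ (r + t)) -
        (ω t - ∫ r in Set.Iic (0:ℝ), Real.exp r * ω (r + t))| :=
    Real.iSup_nonneg fun t => Real.iSup_nonneg fun _ => abs_nonneg _
  rw [abs_of_nonneg hsup0]
  have hθval : 2 * θ * (1 + T) = ε / 4 := by
    rw [hθdef]
    field_simp
    ring
  linarith [hsupb, hSlt]
end
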